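/- arXiv:math/0611807 — 10 statements merged into one kernel-verified Lean document; each statement's English description precedes it below -/
import Mathlib

section
/- For every real number q with 0 < q < 1, every integer h ≥ 1, every complex number w with |w| = 1, every real number x ≥ 0 and every integer n ≥ 0, the series (1+q) · Σ_{k=0}^∞ (-1)^k w^k q^{hk} [x+k]_q^n converges absolutely and equals ((1+q)/(1-q)^n) · Σ_{j=0}^n binom(n,j) (-1)^j q^{xj} / (1 + q^{h+j} w). -/
open Finset

/-- The q-number `[t]_q = (1 - q^t)/(1 - q)` with real power `q ^ t`. -/
noncomputable def qNum (q t : ℝ) : ℝ := (1 - q ^ t) / (1 - q)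

/-- For `0 < q < 1`, an integer `h ≥ 1`, `w ∈ ℂ` with `|w| = 1`, `x ≥ 0` and `n ≥ 0`,
the series `(1+q) · Σ_{k≥0} (-1)^k w^k q^{hk} [x+k]_q^n` converges absolutely and
equals `((1+q)/(1-q)^n) · Σ_{j=0}^n C(n,j) (-1)^j q^{xj} / (1 + q^{h+j} w)`. -/
theorem stmt0 (q : ℝ) (hq0 : 0 < q) (hq1 : q < 1) (h : ℤ) (hh : 1 ≤ h)
    (w : ℂ) (hw : ‖w‖ = 1) (x : ℝ) (hx : 0 ≤ x) (n : ℕ) :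
    Summable (fun k : ℕ =>
      ‖(-1 : ℂ) ^ k * w ^ k * (q : ℂ) ^ (h * k : ℤ) * ((qNum q (x + k) : ℝ) : ℂ) ^ n‖) ∧
    ((1 + q : ℝ) : ℂ) * ∑' k : ℕ,
        (-1 : ℂ) ^ k * w ^ k * (q : ℂ) ^ (h * k : ℤ) * ((qNum q (x + k) : ℝ) : ℂ) ^ n
      = (((1 + q) / (1 - q) ^ n : ℝ) : ℂ) *
        ∑ j ∈ range (n + 1),
          (n.choose j : ℂ) * (-1) ^ j * ((q ^ (x * j) : ℝ) : ℂ) /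
            (1 + (q : ℂ) ^ (h + j : ℤ) * w) := by
  have h1q : (0:ℝ) < 1 - q := by linarith
  have hqc : (q:ℂ) ≠ 0 := by exact_mod_cast hq0.ne'
  -- real binomial expansion of qNum^n
  have real_key : ∀ k j : ℕ, (q ^ (x + (k:ℝ))) ^ j = q ^ (x * j) * (q ^ j) ^ k := by
    intro k j
    rw [← Real.rpow_natCast (q ^ (x + (k:ℝ))) j, ← Real.rpow_mul hq0.le, add_mul,
      Real.rpow_add hq0,
      show ((k:ℝ) * j) = ((k * j : ℕ) : ℝ) by push_cast; ring, Real.rpow_natCast,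
      mul_comm k j, pow_mul]
  have qnum_key : ∀ k : ℕ, (qNum q (x + k)) ^ n
      = ∑ j ∈ range (n + 1),
          ((n.choose j : ℝ) * (-1) ^ j * q ^ (x * j) * (q ^ j) ^ k) / (1 - q) ^ n := by
    intro k
    rw [qNum, div_pow, sub_eq_add_neg, add_comm, add_pow, Finset.sum_div]
    refine Finset.sum_congr rfl fun j hj => ?_
    rw [neg_pow, real_key k j, one_pow]
    ring
  -- the geometric ratios
  set r : ℕ → ℂ := fun j => -(w * (q:ℂ) ^ (h + (j:ℤ))) with hr_def
  set c : ℕ → ℂ := fun j =>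
      (n.choose j : ℂ) * (-1) ^ j * ((q ^ (x * j) : ℝ) : ℂ) / (((1 - q) ^ n : ℝ) : ℂ)
    with hc_def
  have hnorm_r : ∀ j : ℕ, ‖r j‖ < 1 := by
    intro j
    have : ‖r j‖ = q ^ (h + (j:ℤ)) := by
      rw [hr_def]
      simp only [norm_neg, norm_mul, hw, one_mul, norm_zpow, Complex.norm_real,
        Real.norm_eq_abs, abs_of_pos hq0]
    rw [this]
    exact zpow_lt_one₀ hq0 hq1 (by positivity)
  -- per-term decomposition of f over j
  have key : ∀ k : ℕ,
      (-1 : ℂ) ^ k * w ^ k * (q : ℂ) ^ (h * k : ℤ) * ((qNum q (x + k) : ℝ) : ℂ) ^ n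
        = ∑ j ∈ range (n + 1), c j * (r j) ^ k := by
    intro k
    have hq' : (((qNum q (x + k)) : ℝ) : ℂ) ^ n
        = ∑ j ∈ range (n + 1),
            (n.choose j : ℂ) * (-1) ^ j * ((q ^ (x * j) : ℝ) : ℂ) * ((q:ℂ) ^ j) ^ k
              / ((1 - (q:ℂ)) ^ n) := by
      rw [← Complex.ofReal_pow, qnum_key k]
      push_cast
      refine Finset.sum_congr rfl fun i _ => ?_
      ring
    rw [hq', Finset.mul_sum]
    refine Finset.sum_congr rfl fun j hj => ?_
    have hz : ((q:ℂ) ^ (h + (j:ℤ))) ^ k = (q : ℂ) ^ (h * k : ℤ) * ((q:ℂ) ^ j) ^ k := by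
      rw [zpow_add₀ hqc, mul_pow, ← zpow_natCast ((q:ℂ) ^ h) k, ← zpow_mul,
        zpow_natCast ((q:ℂ)) j]
    have hneg : (-(w * (q:ℂ) ^ (h + (j:ℤ)))) ^ k
        = (-1) ^ k * w ^ k * ((q:ℂ) ^ (h + (j:ℤ))) ^ k := by
      rw [neg_pow, mul_pow]; ring
    rw [hc_def, hr_def]
    simp only []
    rw [hneg, hz]
    push_cast
    ring
  -- summability of each geometric piece
  have hsumm : ∀ j ∈ range (n + 1), Summable (fun k : ℕ => c j * (r j) ^ k) := by
    intro j _
    exact (summable_geometric_of_norm_lt_one (hnorm_r j)).mul_left _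
  have hsumf : Summable (fun k : ℕ =>
      (-1 : ℂ) ^ k * w ^ k * (q : ℂ) ^ (h * k : ℤ) * ((qNum q (x + k) : ℝ) : ℂ) ^ n) := by
    have := summable_sum (s := range (n + 1)) (f := fun j (k : ℕ) => c j * (r j) ^ k) hsumm
    exact this.congr fun k => (key k).symm
  refine ⟨hsumf.norm, ?_⟩
  have htsum : (∑' k : ℕ,
        (-1 : ℂ) ^ k * w ^ k * (q : ℂ) ^ (h * k : ℤ) * ((qNum q (x + k) : ℝ) : ℂ) ^ n)
      = ∑ j ∈ range (n + 1), c j * (1 - r j)⁻¹ := by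
    rw [tsum_congr key, Summable.tsum_finsetSum hsumm]
    refine Finset.sum_congr rfl fun j _ => ?_
    rw [tsum_mul_left, tsum_geometric_of_norm_lt_one (hnorm_r j)]
  rw [htsum, Finset.mul_sum, Finset.mul_sum]
  refine Finset.sum_congr rfl fun j _ => ?_
  have hden : (1 : ℂ) + (q:ℂ) ^ (h + (j:ℤ)) * w ≠ 0 := by
    intro hc0
    have : ‖(q:ℂ) ^ (h + (j:ℤ)) * w‖ < 1 := by
      have := hnorm_r j
      rwa [hr_def, norm_neg, mul_comm] at this
    rw [show (q:ℂ) ^ (h + (j:ℤ)) * w = -1 by linear_combination hc0] at this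
    simp at this
  have h1r : (1 : ℂ) - r j = 1 + (q:ℂ) ^ (h + (j:ℤ)) * w := by
    rw [hr_def]; ring
  rw [hc_def, h1r]
  have h1qn : (((1 - q) ^ n : ℝ) : ℂ) ≠ 0 := by
    exact_mod_cast (pow_ne_zero n h1q.ne')
  push_cast
  field_simp
  try ring
end

section
/- Let q be real with 0 < q < 1, h ≥ 1 an integer, w a complex number with |w| = 1, x ≥ 0 real, n ≥ 0 an integer, and let d be an odd positive integer. Then the twisted q-Euler polynomial satisfies the distribution relation E^{(h,1)}_{n,w,q}(x) = ((1+q)/(1+q^d)) · [d]_q^n · Σ_{a=0}^{d-1} q^{ha} w^a (-1)^a E^{(h,1)}_{n, w^d, q^d}((x+a)/d). -/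
open Finset

/-- The twisted q-Euler polynomial
`E^{(h,1)}_{n,w,q}(x) = (1+q) · Σ_{k≥0} (-1)^k w^k q^{hk} [x+k]_q^n`. -/
noncomputable def twE (q : ℝ) (h : ℤ) (w : ℂ) (n : ℕ) (x : ℝ) : ℂ :=
  ((1 + q : ℝ) : ℂ) * ∑' k : ℕ,
    (-1 : ℂ) ^ k * w ^ k * (q : ℂ) ^ (h * k : ℤ) * ((qNum q (x + k) : ℝ) : ℂ) ^ n

lemma qNum_abs_le {q : ℝ} (hq0 : 0 < q) (hq1 : q < 1) {t : ℝ} (ht : 0 ≤ t) :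
    |qNum q t| ≤ (1 - q)⁻¹ := by
  have h1 : q ^ t ≤ 1 := Real.rpow_le_one hq0.le hq1.le ht
  have h2 : 0 < q ^ t := Real.rpow_pos_of_pos hq0 t
  have h3 : (0:ℝ) < 1 - q := by linarith
  have h4 : (0:ℝ) ≤ 1 - q ^ t := by linarith
  rw [qNum, abs_of_nonneg (div_nonneg h4 h3.le)]
  rw [div_le_iff₀ h3, inv_mul_cancel₀ h3.ne']
  linarith

lemma summable_twE {q : ℝ} (hq0 : 0 < q) (hq1 : q < 1) {h : ℤ} (hh : 1 ≤ h)
    (w : ℂ) (hw : ‖w‖ = 1) {x : ℝ} (hx : 0 ≤ x) (n : ℕ) :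
    Summable (fun k : ℕ =>
      (-1 : ℂ) ^ k * w ^ k * (q : ℂ) ^ (h * k : ℤ) * ((qNum q (x + k) : ℝ) : ℂ) ^ n) := by
  have hqh0 : (0:ℝ) < q ^ h := zpow_pos hq0 h
  have hqh1 : q ^ h ≤ q := by
    calc q ^ h ≤ q ^ (1:ℤ) := zpow_le_zpow_right_of_le_one₀ hq0 hq1.le hh
    _ = q := zpow_one q
  apply Summable.of_norm
  refine Summable.of_nonneg_of_le (fun k => norm_nonneg _) (fun k => ?_)
    ((summable_geometric_of_lt_one hqh0.le (lt_of_le_of_lt hqh1 hq1)).mul_left ((1 - q)⁻¹ ^ n))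
  have hxk : (0:ℝ) ≤ x + k := by positivity
  simp only [norm_mul, norm_pow, norm_zpow, norm_neg, norm_one, hw, one_pow,
    Complex.norm_real, Real.norm_of_nonneg hq0.le, Real.norm_eq_abs, one_mul]
  rw [mul_comm]
  have h1 : q ^ (h * (k:ℤ)) = (q ^ h) ^ k := by
    rw [zpow_mul, zpow_natCast]
  rw [h1]
  gcongr
  exact qNum_abs_le hq0 hq1 hxk

lemma qNum_mul {q : ℝ} (hq0 : 0 < q) (hq1 : q < 1) {d : ℕ} (hd0 : 0 < d) (s : ℝ) :
    qNum q ((d : ℝ) * s) = qNum q d * qNum (q ^ d) s := by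
  have hqd1 : q ^ d < 1 := pow_lt_one₀ hq0.le hq1 hd0.ne'
  have h1q : (1:ℝ) - q ≠ 0 := by linarith
  have h1qd : (1:ℝ) - q ^ d ≠ 0 := by linarith
  have e1 : (q ^ d : ℝ) ^ s = q ^ ((d:ℝ) * s) := by
    rw [← Real.rpow_natCast q d, ← Real.rpow_mul hq0.le]
  have e2 : q ^ ((d:ℕ):ℝ) = q ^ d := Real.rpow_natCast q d
  rw [qNum, qNum, qNum, e1, e2]
  field_simp

set_option maxHeartbeats 1000000 in
/-- Distribution relation for twisted q-Euler polynomials: for odd `d ≥ 1`,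
`E^{(h,1)}_{n,w,q}(x) = ((1+q)/(1+q^d)) [d]_q^n Σ_{a=0}^{d-1} q^{ha} w^a (-1)^a
E^{(h,1)}_{n,w^d,q^d}((x+a)/d)`. -/
theorem stmt1 (q : ℝ) (hq0 : 0 < q) (hq1 : q < 1) (h : ℤ) (hh : 1 ≤ h)
    (w : ℂ) (hw : ‖w‖ = 1) (x : ℝ) (hx : 0 ≤ x) (n : ℕ)
    (d : ℕ) (hd : Odd d) (hd0 : 0 < d) :
    twE q h w n x = (((1 + q) / (1 + q ^ d) : ℝ) : ℂ) * ((qNum q d : ℝ) : ℂ) ^ n *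
      ∑ a ∈ range d,
        (q : ℂ) ^ (h * a : ℤ) * w ^ a * (-1) ^ a * twE (q ^ d) h (w ^ d) n ((x + a) / d) := by
  haveI : NeZero d := ⟨hd0.ne'⟩
  have hqd0 : 0 < q ^ d := pow_pos hq0 d
  have hqd1 : q ^ d < 1 := pow_lt_one₀ hq0.le hq1 hd0.ne'
  have hdR : (0:ℝ) < (d:ℝ) := by exact_mod_cast hd0
  have h1qd : (1:ℝ) + q ^ d ≠ 0 := by positivity
  have hwd : ‖w ^ d‖ = 1 := by rw [norm_pow, hw, one_pow]
  set F : ℕ → ℂ := fun k =>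
    (-1 : ℂ) ^ k * w ^ k * (q : ℂ) ^ (h * k : ℤ) * ((qNum q (x + k) : ℝ) : ℂ) ^ n with hF
  have hFsum : Summable F := summable_twE hq0 hq1 hh w hw hx n
  set G : ℕ → ℕ → ℂ := fun a m =>
    (-1 : ℂ) ^ m * (w ^ d) ^ m * ((q ^ d : ℝ) : ℂ) ^ (h * m : ℤ) *
      ((qNum (q ^ d) ((x + a) / d + m) : ℝ) : ℂ) ^ n with hG
  -- key pointwise identity
  have key : ∀ a : ℕ, a < d → ∀ m : ℕ,
      F (m * d + a) = (q : ℂ) ^ (h * a : ℤ) * w ^ a * (-1) ^ a *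
        ((qNum q d : ℝ) : ℂ) ^ n * G a m := by
    intro a ha m
    have hqnum : qNum q (x + ((m * d + a : ℕ) : ℝ)) =
        qNum q d * qNum (q ^ d) ((x + a) / d + m) := by
      have : x + ((m * d + a : ℕ) : ℝ) = (d : ℝ) * ((x + a) / d + m) := by
        push_cast
        field_simp
        ring
      rw [this, qNum_mul hq0 hq1 hd0]
    simp only [hF, hG]
    rw [hqnum]
    have e1 : (-1 : ℂ) ^ (m * d + a) = (-1) ^ m * (-1) ^ a := by
      rw [pow_add, pow_mul]
      congr 1
      rcases Nat.even_or_odd m with hm | hm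
      · rw [hm.neg_one_pow, one_pow]
      · rw [hm.neg_one_pow, hd.neg_one_pow]
    have e2 : w ^ (m * d + a) = (w ^ d) ^ m * w ^ a := by
      rw [pow_add, pow_mul']
    have e3 : (q : ℂ) ^ (h * ((m * d + a : ℕ) : ℤ)) =
        (q : ℂ) ^ (h * a : ℤ) * ((q : ℂ) ^ (d : ℤ)) ^ (h * m : ℤ) := by
      rw [← zpow_mul, ← zpow_add₀ (by exact_mod_cast hq0.ne' : (q:ℂ) ≠ 0)]
      congr 1
      push_cast
      ring
    have e4 : ((q ^ d : ℝ) : ℂ) = (q : ℂ) ^ (d : ℤ) := by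
      rw [zpow_natCast]; push_cast; ring
    rw [e1, e2, e3, e4]
    push_cast
    ring
  -- the equivalence
  let e : Fin d × ℕ ≃ ℕ := (Equiv.prodComm (Fin d) ℕ).trans (Nat.divModEquiv d).symm
  have he : ∀ p : Fin d × ℕ, e p = p.2 * d + (p.1 : ℕ) := fun p => rfl
  have hsum2 : Summable (fun p : Fin d × ℕ => F (e p)) := e.summable_iff.mpr hFsum
  have step1 : ∑' k : ℕ, F k = ∑ a : Fin d, ∑' m : ℕ, F (m * d + (a : ℕ)) := by
    rw [← e.tsum_eq F, Summable.tsum_prod hsum2, tsum_fintype]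
    exact Finset.sum_congr rfl fun b _ => tsum_congr fun c => congrArg F (he (b, c))
  have inner : ∀ a : ℕ, a < d → ∑' m : ℕ, F (m * d + a) =
      (q : ℂ) ^ (h * a : ℤ) * w ^ a * (-1) ^ a * ((qNum q d : ℝ) : ℂ) ^ n *
        ∑' m : ℕ, G a m := by
    intro a ha
    rw [← tsum_mul_left]
    exact tsum_congr fun m => key a ha m
  have twE_eq : ∀ a : ℕ, twE (q ^ d) h (w ^ d) n ((x + a) / d) =
      ((1 + q ^ d : ℝ) : ℂ) * ∑' m : ℕ, G a m := by
    intro a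
    simp only [twE, hG]
  have h1qdC : (1 : ℂ) + (q : ℂ) ^ d ≠ 0 := by exact_mod_cast h1qd
  rw [twE, step1,
    Fin.sum_univ_eq_sum_range (fun a => ∑' m : ℕ, F (m * d + a)) d,
    Finset.mul_sum, Finset.mul_sum]
  refine Finset.sum_congr rfl fun a ha => ?_
  rw [inner a (Finset.mem_range.mp ha), twE_eq a]
  have h2 : ((1 + q ^ d : ℝ) : ℂ) = 1 + (q : ℂ) ^ d := by push_cast; ring
  have h3 : (((1 + q) / (1 + q ^ d) : ℝ) : ℂ) = ((1 + q : ℝ) : ℂ) / (1 + (q : ℂ) ^ d) := by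
    push_cast; ring
  rw [h2, h3]
  field_simp
end

section
/- Let q be real with 0 < q < 1, h ≥ 1 an integer, w a complex number with |w| = 1, and χ a Dirichlet character modulo a positive integer f. Then for every s ∈ ℂ the series defining the twisted q-l-function l^{(h,1)}_{q,w}(s,χ) := (1+q) · Σ_{k=1}^∞ χ(k) (-1)^k q^{hk} w^k exp(-s · log [k]_q) converges absolutely, and the function s ↦ l^{(h,1)}_{q,w}(s,χ) is complex-differentiable (hence analytic) on all of ℂ. -/
/-- The twisted q-l-function attached to a Dirichlet character `χ` modulo `f`:
`l^{(h,1)}_{q,w}(s, χ) = (1+q) · Σ_{k≥1} χ(k) (-1)^k q^{hk} w^k exp(-s · log [k]_q)`. -/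
noncomputable def twL (q : ℝ) (h : ℤ) (w : ℂ) {f : ℕ} (χ : DirichletCharacter ℂ f)
    (s : ℂ) : ℂ :=
  ((1 + q : ℝ) : ℂ) * ∑' k : ℕ,
    χ ((k + 1 : ℕ) : ZMod f) * (-1 : ℂ) ^ (k + 1) * (q : ℂ) ^ (h * (k + 1) : ℤ) *
      w ^ (k + 1) * Complex.exp (-s * (Real.log (qNum q ((k : ℝ) + 1)) : ℂ))

theorem one_le_qNum {q t : ℝ} (hq0 : 0 ≤ q) (hq1 : q < 1) (ht : 1 ≤ t) : 1 ≤ qNum q t := by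
  have hqt : q ^ t ≤ q := by
    simpa using Real.rpow_le_rpow_of_exponent_ge' hq0 hq1.le zero_le_one ht
  rw [qNum, le_div_iff₀ (by linarith)]
  linarith

theorem qNum_le_inv_one_sub {q : ℝ} (hq0 : 0 ≤ q) (hq1 : q < 1) (t : ℝ) :
    qNum q t ≤ (1 - q)⁻¹ := by
  rw [qNum, div_eq_mul_inv]
  exact mul_le_of_le_one_left (by simpa using hq1.le) (by linarith [Real.rpow_nonneg hq0 t])

theorem log_qNum_mem_Icc {q t : ℝ} (hq0 : 0 ≤ q) (hq1 : q < 1) (ht : 1 ≤ t) :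
    Real.log (qNum q t) ∈ Set.Icc 0 (Real.log (1 - q)⁻¹) := by
  have hone := one_le_qNum hq0 hq1 ht
  exact ⟨Real.log_nonneg hone,
    Real.log_le_log (by linarith) (qNum_le_inv_one_sub hq0 hq1 t)⟩

theorem Complex.norm_exp_neg_mul_ofReal_le {s : ℂ} {R r L : ℝ} (hs : ‖s‖ ≤ R)
    (hr : r ∈ Set.Icc 0 L) : ‖Complex.exp (-s * r)‖ ≤ Real.exp (R * L) := by
  rw [Complex.norm_exp, Real.exp_le_exp]
  have hre : (-s * r).re = -s.re * r := by simp [Complex.mul_re]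
  rw [hre]
  calc -s.re * r ≤ ‖s‖ * r :=
        mul_le_mul_of_nonneg_right ((neg_le_abs s.re).trans (Complex.abs_re_le_norm s)) hr.1
    _ ≤ R * L := mul_le_mul hs hr.2 hr.1 ((norm_nonneg s).trans hs)

/-- Indexed from `0`: `twLTerm … s k` is the paper's term of index `k + 1`. -/
noncomputable def twLTerm (q : ℝ) (h : ℤ) (w : ℂ) {f : ℕ} (χ : DirichletCharacter ℂ f)
    (s : ℂ) (k : ℕ) : ℂ :=
  χ ((k + 1 : ℕ) : ZMod f) * (-1 : ℂ) ^ (k + 1) * (q : ℂ) ^ (h * (k + 1) : ℤ) *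
    w ^ (k + 1) * Complex.exp (-s * (Real.log (qNum q ((k : ℝ) + 1)) : ℂ))

section TermBounds

variable {q : ℝ} (hq0 : 0 < q) (hq1 : q < 1) {h : ℤ} (hh : 1 ≤ h) {w : ℂ} (hw : ‖w‖ = 1)
  {f : ℕ} (χ : DirichletCharacter ℂ f)
include hq0 hq1 hh hw

theorem norm_twLTerm_le {s : ℂ} {R : ℝ} (hs : ‖s‖ ≤ R) (k : ℕ) :
    ‖twLTerm q h w χ s k‖ ≤ Real.exp (R * Real.log (1 - q)⁻¹) * q ^ (k + 1) := by
  have hχ : ‖χ ((k + 1 : ℕ) : ZMod f)‖ ≤ 1 := χ.norm_le_one _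
  have hqpow : q ^ (h * (k + 1) : ℤ) ≤ q ^ (k + 1) := by
    rw [← zpow_natCast]
    exact zpow_le_zpow_right_of_le_one₀ hq0 hq1.le
      (by push_cast; nlinarith)
  have hexp := Complex.norm_exp_neg_mul_ofReal_le hs
    (log_qNum_mem_Icc hq0.le hq1 (le_add_of_nonneg_left k.cast_nonneg))
  simp only [twLTerm, norm_mul, norm_pow, norm_neg, norm_one, one_pow, hw, mul_one, norm_zpow,
    Complex.norm_real, Real.norm_of_nonneg hq0.le]
  calc ‖χ ((k + 1 : ℕ) : ZMod f)‖ * q ^ (h * (k + 1) : ℤ) *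
        ‖Complex.exp (-s * (Real.log (qNum q ((k : ℝ) + 1)) : ℂ))‖
      ≤ 1 * q ^ (k + 1) * Real.exp (R * Real.log (1 - q)⁻¹) := by gcongr
    _ = Real.exp (R * Real.log (1 - q)⁻¹) * q ^ (k + 1) := by ring

omit hh hw in
theorem summable_const_mul_pow_succ (C : ℝ) : Summable fun k : ℕ => C * q ^ (k + 1) :=
  ((summable_nat_add_iff 1).mpr (summable_geometric_of_lt_one hq0.le hq1)).mul_left C

theorem summable_norm_twLTerm (s : ℂ) : Summable fun k => ‖twLTerm q h w χ s k‖ :=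
  .of_nonneg_of_le (fun _ => norm_nonneg _) (norm_twLTerm_le hq0 hq1 hh hw χ le_rfl)
    (summable_const_mul_pow_succ hq0 hq1 _)

theorem differentiable_tsum_twLTerm : Differentiable ℂ fun s => ∑' k, twLTerm q h w χ s k := by
  intro s₀
  set R := ‖s₀‖ + 1
  have hball : DifferentiableOn ℂ (fun s => ∑' k, twLTerm q h w χ s k) (Metric.ball 0 R) :=
    Complex.differentiableOn_tsum_of_summable_norm (summable_const_mul_pow_succ hq0 hq1 _)
      (fun k => by unfold twLTerm; fun_prop) Metric.isOpen_ball
      (fun k s hs => norm_twLTerm_le hq0 hq1 hh hw χ (mem_ball_zero_iff.mp hs).le k)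
  exact hball.differentiableAt (Metric.isOpen_ball.mem_nhds (by simp [R]))

end TermBounds

theorem stmt6_general (q : ℝ) (hq0 : 0 < q) (hq1 : q < 1) (h : ℤ) (hh : 1 ≤ h)
    (w : ℂ) (hw : ‖w‖ = 1) (f : ℕ) (χ : DirichletCharacter ℂ f) :
    (∀ s : ℂ, Summable (fun k : ℕ =>
      ‖χ ((k + 1 : ℕ) : ZMod f) * (-1 : ℂ) ^ (k + 1) * (q : ℂ) ^ (h * (k + 1) : ℤ) *
        w ^ (k + 1) * Complex.exp (-s * (Real.log (qNum q ((k : ℝ) + 1)) : ℂ))‖)) ∧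
    Differentiable ℂ (fun s : ℂ => twL q h w χ s) :=
  ⟨summable_norm_twLTerm hq0 hq1 hh hw χ,
    (differentiable_const _).mul (differentiable_tsum_twLTerm hq0 hq1 hh hw χ)⟩

/-- For `0 < q < 1`, integer `h ≥ 1`, `|w| = 1` and a Dirichlet character `χ` modulo a
positive integer `f`, the series defining the twisted q-l-function converges absolutely
for every `s ∈ ℂ`, and `s ↦ l^{(h,1)}_{q,w}(s, χ)` is entire. -/
theorem stmt6 (q : ℝ) (hq0 : 0 < q) (hq1 : q < 1) (h : ℤ) (hh : 1 ≤ h)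
    (w : ℂ) (hw : ‖w‖ = 1) (f : ℕ) (hf0 : 0 < f) (χ : DirichletCharacter ℂ f) :
    (∀ s : ℂ, Summable (fun k : ℕ =>
      ‖χ ((k + 1 : ℕ) : ZMod f) * (-1 : ℂ) ^ (k + 1) * (q : ℂ) ^ (h * (k + 1) : ℤ) *
        w ^ (k + 1) * Complex.exp (-s * (Real.log (qNum q ((k : ℝ) + 1)) : ℂ))‖)) ∧
    Differentiable ℂ (fun s : ℂ => twL q h w χ s) :=
  stmt6_general q hq0 hq1 h hh w hw f χ
end

section
/- Let q be real with 0 < q < 1, h ≥ 1 an integer, w a complex number with |w| = 1, and χ a Dirichlet character modulo f where f is an odd positive integer. Then for every s ∈ ℂ, l^{(h,1)}_{q,w}(s, χ) = exp(-s · log [f]_q) · ((1+q)/(1+q^f)) · Σ_{a=1}^{f} χ(a) (-1)^a q^{ha} w^a ζ^{(h,1)}_{E, q^f, w^f}(s, a/f). -/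
open Finset

/-- The twisted Hurwitz q-Euler zeta function
`ζ^{(h,1)}_{E,q,w}(s,x) = (1+q) · Σ_{k≥0} (-1)^k q^{hk} w^k exp(-s · log [x+k]_q)`. -/
noncomputable def twZeta (q : ℝ) (h : ℤ) (w : ℂ) (s : ℂ) (x : ℝ) : ℂ :=
  ((1 + q : ℝ) : ℂ) * ∑' k : ℕ,
    (-1 : ℂ) ^ k * (q : ℂ) ^ (h * k : ℤ) * w ^ k *
      Complex.exp (-s * (Real.log (qNum q (x + k)) : ℂ))

/-! ### Auxiliary lemmas -/

/-- The summand of `twL` (without the `(1+q)` prefactor). -/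
noncomputable def Fterm (q : ℝ) (h : ℤ) (w : ℂ) {f : ℕ} (χ : DirichletCharacter ℂ f)
    (s : ℂ) (k : ℕ) : ℂ :=
  χ ((k + 1 : ℕ) : ZMod f) * (-1 : ℂ) ^ (k + 1) * (q : ℂ) ^ (h * (k + 1) : ℤ) *
      w ^ (k + 1) * Complex.exp (-s * (Real.log (qNum q ((k : ℝ) + 1)) : ℂ))

lemma qNum_pos {q : ℝ} (hq0 : 0 < q) (hq1 : q < 1) {t : ℝ} (ht : 0 < t) : 0 < qNum q t := by
  have h1 : q ^ t < 1 := Real.rpow_lt_one hq0.le hq1 ht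
  exact div_pos (by linarith) (by linarith)

lemma qNum_one_le {q : ℝ} (hq0 : 0 < q) (hq1 : q < 1) {t : ℝ} (ht : 1 ≤ t) : 1 ≤ qNum q t := by
  have h1 : q ^ t ≤ q ^ (1:ℝ) := Real.rpow_le_rpow_of_exponent_ge hq0 hq1.le ht
  rw [Real.rpow_one] at h1
  rw [qNum, le_div_iff₀ (by linarith)]
  linarith

lemma qNum_le {q : ℝ} (hq0 : 0 < q) (hq1 : q < 1) (t : ℝ) : qNum q t ≤ 1 / (1 - q) := by
  have h1 : 0 < q ^ t := Real.rpow_pos_of_pos hq0 t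
  rw [qNum]
  gcongr
  · linarith

lemma qNum_split {q : ℝ} (hq0 : 0 < q) (hq1 : q < 1) {f : ℕ} (hf0 : 0 < f) (i m : ℕ) :
    qNum q (((m * f + i : ℕ) : ℝ) + 1)
      = qNum q (f : ℝ) * qNum (q ^ f) (((i + 1 : ℕ) : ℝ) / f + m) := by
  have hfR : (0:ℝ) < f := by exact_mod_cast hf0
  have h1 : q ^ (((m * f + i : ℕ) : ℝ) + 1) = q ^ (m * f + i + 1 : ℕ) := by
    rw [← Real.rpow_natCast q (m * f + i + 1)]
    push_cast
    ring_nf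
  have h2 : q ^ ((f : ℕ) : ℝ) = q ^ f := Real.rpow_natCast q f
  have h3 : (q ^ f) ^ (((i + 1 : ℕ) : ℝ) / f + m) = q ^ (m * f + i + 1 : ℕ) := by
    rw [← Real.rpow_natCast q f, ← Real.rpow_natCast q (m * f + i + 1),
      ← Real.rpow_mul hq0.le]
    congr 1
    field_simp
    push_cast
    ring
  have hq : (1:ℝ) - q ≠ 0 := by linarith
  have hqf : (1:ℝ) - q ^ f ≠ 0 := by
    have := pow_lt_one₀ hq0.le hq1 hf0.ne'
    linarith
  rw [qNum, qNum, qNum, h1, h2, h3]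
  field_simp

lemma exp_term_bound {q : ℝ} (hq0 : 0 < q) (hq1 : q < 1) (s : ℂ) {t : ℝ} (ht : 1 ≤ t) :
    ‖Complex.exp (-s * (Real.log (qNum q t) : ℂ))‖ ≤
      Real.exp (|s.re| * Real.log (1 / (1 - q))) := by
  have hr1 : 1 ≤ qNum q t := qNum_one_le hq0 hq1 ht
  have hrB : qNum q t ≤ 1 / (1 - q) := qNum_le hq0 hq1 t
  have h0 : 0 ≤ Real.log (qNum q t) := Real.log_nonneg hr1
  have hB : Real.log (qNum q t) ≤ Real.log (1 / (1 - q)) :=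
    Real.log_le_log (by linarith) hrB
  rw [Complex.norm_exp]
  apply Real.exp_le_exp.mpr
  have hre : (-s * (Real.log (qNum q t) : ℂ)).re = -s.re * Real.log (qNum q t) := by
    simp
  rw [hre]
  calc -s.re * Real.log (qNum q t) ≤ |s.re| * Real.log (qNum q t) :=
        mul_le_mul_of_nonneg_right (neg_le_abs _) h0
    _ ≤ |s.re| * Real.log (1 / (1 - q)) := mul_le_mul_of_nonneg_left hB (abs_nonneg _)

lemma summable_F {q : ℝ} (hq0 : 0 < q) (hq1 : q < 1) {h : ℤ} (hh : 1 ≤ h)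
    {w : ℂ} (hw : ‖w‖ = 1) {f : ℕ} (χ : DirichletCharacter ℂ f) (s : ℂ) :
    Summable (Fterm q h w χ s) := by
  set C := Real.exp (|s.re| * Real.log (1 / (1 - q))) with hC
  apply Summable.of_norm_bounded (g := fun k => C * q ^ k)
    ((summable_geometric_of_lt_one hq0.le hq1).mul_left C)
  intro k
  have hnq : ‖(q : ℂ)‖ = q := by
    rw [Complex.norm_real, Real.norm_eq_abs, abs_of_pos hq0]
  have h3 : ‖(q : ℂ) ^ (h * (k + 1) : ℤ)‖ ≤ q ^ k := by
    rw [norm_zpow, hnq]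
    calc q ^ (h * (k + 1) : ℤ) ≤ q ^ (k : ℤ) := by
          apply zpow_le_zpow_right_of_le_one₀ hq0 hq1.le
          nlinarith [Int.natCast_nonneg k]
      _ = q ^ k := by rw [zpow_natCast]
  have h5 : ‖Complex.exp (-s * (Real.log (qNum q ((k : ℝ) + 1)) : ℂ))‖ ≤ C :=
    exp_term_bound hq0 hq1 s (by linarith [Nat.cast_nonneg (α := ℝ) k])
  have h1 : ‖χ ((k + 1 : ℕ) : ZMod f)‖ ≤ 1 := DirichletCharacter.norm_le_one χ _
  have h2 : ‖(-1 : ℂ) ^ (k + 1)‖ ≤ 1 := by rw [norm_pow, norm_neg, norm_one, one_pow]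
  have h4 : ‖w ^ (k + 1)‖ ≤ 1 := by rw [norm_pow, hw, one_pow]
  calc ‖Fterm q h w χ s k‖
      = ‖χ ((k + 1 : ℕ) : ZMod f)‖ * ‖(-1 : ℂ) ^ (k + 1)‖ *
        ‖(q : ℂ) ^ (h * (k + 1) : ℤ)‖ * ‖w ^ (k + 1)‖ *
        ‖Complex.exp (-s * (Real.log (qNum q ((k : ℝ) + 1)) : ℂ))‖ := by
        rw [Fterm, norm_mul, norm_mul, norm_mul, norm_mul]
    _ ≤ 1 * 1 * q ^ k * 1 * C :=
        mul_le_mul (mul_le_mul (mul_le_mul (mul_le_mul h1 h2 (norm_nonneg _) zero_le_one)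
          h3 (norm_nonneg _) (by norm_num)) h4 (norm_nonneg _) (by positivity))
          h5 (norm_nonneg _) (by positivity)
    _ = C * q ^ k := by ring

lemma term_eq {q : ℝ} (hq0 : 0 < q) (hq1 : q < 1) (h : ℤ) (w : ℂ) {f : ℕ}
    (hf : Odd f) (hf0 : 0 < f) (χ : DirichletCharacter ℂ f) (s : ℂ) (i m : ℕ) :
    Fterm q h w χ s (m * f + i)
      = (Complex.exp (-s * (Real.log (qNum q (f : ℝ)) : ℂ)) *
          (χ ((i + 1 : ℕ) : ZMod f) * (-1 : ℂ) ^ (i + 1) * (q : ℂ) ^ (h * (i + 1) : ℤ) *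
            w ^ (i + 1))) *
        ((-1 : ℂ) ^ m * ((q ^ f : ℝ) : ℂ) ^ (h * m : ℤ) * (w ^ f) ^ m *
          Complex.exp (-s * (Real.log (qNum (q ^ f) (((i + 1 : ℕ) : ℝ) / f + m)) : ℂ))) := by
  have hfR : (0:ℝ) < f := by exact_mod_cast hf0
  have hqfC : ((q ^ f : ℝ) : ℂ) = (q : ℂ) ^ f := by push_cast; ring
  have hqC : (q : ℂ) ≠ 0 := by exact_mod_cast hq0.ne'
  have e1 : ((m * f + i + 1 : ℕ) : ZMod f) = ((i + 1 : ℕ) : ZMod f) := by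
    push_cast
    simp [ZMod.natCast_self]
  have e2 : (-1 : ℂ) ^ (m * f + i + 1) = (-1 : ℂ) ^ (i + 1) * (-1 : ℂ) ^ m := by
    rw [show m * f + i + 1 = (i + 1) + f * m from by ring, pow_add, pow_mul, hf.neg_one_pow]
  have e3 : (q : ℂ) ^ (h * (((m * f + i : ℕ) : ℤ) + 1)) =
      (q : ℂ) ^ (h * (i + 1) : ℤ) * ((q ^ f : ℝ) : ℂ) ^ (h * m : ℤ) := by
    rw [hqfC, ← zpow_natCast (q : ℂ) f, ← zpow_mul]
    rw [← zpow_add₀ hqC]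
    congr 1
    push_cast
    ring
  have e4 : w ^ (m * f + i + 1) = w ^ (i + 1) * (w ^ f) ^ m := by
    rw [show m * f + i + 1 = (i + 1) + f * m from by ring, pow_add, pow_mul]
  have e5 : Complex.exp (-s * (Real.log (qNum q (((m * f + i : ℕ) : ℝ) + 1)) : ℂ)) =
      Complex.exp (-s * (Real.log (qNum q (f : ℝ)) : ℂ)) *
      Complex.exp (-s * (Real.log (qNum (q ^ f) (((i + 1 : ℕ) : ℝ) / f + m)) : ℂ)) := by
    rw [← Complex.exp_add]
    congr 1
    have hA : qNum q (f : ℝ) ≠ 0 := (qNum_pos hq0 hq1 hfR).ne'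
    have hB : qNum (q ^ f) (((i + 1 : ℕ) : ℝ) / f + m) ≠ 0 := by
      refine (qNum_pos (pow_pos hq0 f) (pow_lt_one₀ hq0.le hq1 hf0.ne') ?_).ne'
      positivity
    rw [qNum_split hq0 hq1 hf0 i m, Real.log_mul hA hB]
    push_cast
    ring
  rw [Fterm, e1, e2, e3, e4, e5]
  ring

/-- Expression of the twisted q-l-function in terms of twisted Hurwitz q-Euler zeta
functions: for a Dirichlet character `χ` of odd conductor `f`,
`l^{(h,1)}_{q,w}(s, χ) = [f]_q^{-s} ((1+q)/(1+q^f))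
  Σ_{a=1}^{f} χ(a)(-1)^a q^{ha} w^a ζ^{(h,1)}_{E,q^f,w^f}(s, a/f)`. -/
theorem stmt8 (q : ℝ) (hq0 : 0 < q) (hq1 : q < 1) (h : ℤ) (hh : 1 ≤ h)
    (w : ℂ) (hw : ‖w‖ = 1) (f : ℕ) (hf : Odd f) (hf0 : 0 < f)
    (χ : DirichletCharacter ℂ f) (s : ℂ) :
    twL q h w χ s = Complex.exp (-s * (Real.log (qNum q f) : ℂ)) *
      (((1 + q) / (1 + q ^ f) : ℝ) : ℂ) *
      ∑ a ∈ Icc 1 f,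
        χ ((a : ℕ) : ZMod f) * (-1 : ℂ) ^ a * (q : ℂ) ^ (h * a : ℤ) * w ^ a *
          twZeta (q ^ f) h (w ^ f) s ((a : ℝ) / f) := by
  have : NeZero f := ⟨hf0.ne'⟩
  have hFsum : Summable (Fterm q h w χ s) := summable_F hq0 hq1 hh hw χ s
  let e : Fin f × ℕ ≃ ℕ := (Equiv.prodComm (Fin f) ℕ).trans (Nat.divModEquiv f).symm
  have hsum2 : Summable (Fterm q h w χ s ∘ e) := (Equiv.summable_iff e).mpr hFsum
  have hinj : ∀ a : Fin f, Function.Injective fun m : ℕ => m * f + a.val := by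
    intro a m1 m2 hm
    dsimp at hm
    exact Nat.eq_of_mul_eq_mul_right hf0 (Nat.add_right_cancel hm)
  have hsec : ∀ a : Fin f, Summable fun m : ℕ => Fterm q h w χ s (e (a, m)) := by
    intro a
    exact hFsum.comp_injective (hinj a)
  have hstep : ∑' k, Fterm q h w χ s k
      = ∑ i ∈ range f, ∑' m : ℕ, Fterm q h w χ s (m * f + i) := by
    calc ∑' k, Fterm q h w χ s k
        = ∑' p : Fin f × ℕ, Fterm q h w χ s (e p) := (Equiv.tsum_eq e _).symm
      _ = ∑' (a : Fin f) (m : ℕ), Fterm q h w χ s (e (a, m)) := Summable.tsum_prod' hsum2 hsec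
      _ = ∑ a : Fin f, ∑' m : ℕ, Fterm q h w χ s (m * f + a.val) := tsum_fintype _
      _ = ∑ i ∈ range f, ∑' m : ℕ, Fterm q h w χ s (m * f + i) :=
          Fin.sum_univ_eq_sum_range (fun i => ∑' m : ℕ, Fterm q h w χ s (m * f + i)) f
  have key : ∀ i ∈ range f, ∑' m : ℕ, Fterm q h w χ s (m * f + i)
      = (Complex.exp (-s * (Real.log (qNum q (f : ℝ)) : ℂ)) *
          (χ ((i + 1 : ℕ) : ZMod f) * (-1 : ℂ) ^ (i + 1) * (q : ℂ) ^ (h * (i + 1) : ℤ) *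
            w ^ (i + 1))) *
        ∑' m : ℕ, ((-1 : ℂ) ^ m * ((q ^ f : ℝ) : ℂ) ^ (h * m : ℤ) * (w ^ f) ^ m *
          Complex.exp (-s * (Real.log (qNum (q ^ f) (((i + 1 : ℕ) : ℝ) / f + m)) : ℂ))) := by
    intro i _
    rw [tsum_congr (fun m => term_eq hq0 hq1 h w hf hf0 χ s i m)]
    exact tsum_mul_left
  have hden : ((1 + q ^ f : ℝ) : ℂ) ≠ 0 := by
    have : (0:ℝ) < 1 + q ^ f := by positivity
    exact_mod_cast this.ne'
  have twL_eq : twL q h w χ s = ((1 + q : ℝ) : ℂ) * ∑' k, Fterm q h w χ s k := rfl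
  rw [twL_eq, hstep, sum_congr rfl key]
  rw [show Icc 1 f = Ico 1 (f + 1) from (Finset.Ico_add_one_right_eq_Icc 1 f).symm,
    Finset.sum_Ico_eq_sum_range]
  simp only [Nat.add_sub_cancel, show ∀ j : ℕ, 1 + j = j + 1 from fun j => Nat.add_comm 1 j]
  rw [Finset.mul_sum, Finset.mul_sum]
  refine sum_congr rfl fun i _ => ?_
  rw [twZeta]
  push_cast
  field_simp
  rw [eq_div_iff (by push_cast at hden; exact hden)]
end

section
/- Let p be an odd prime and let f : ℤ_p → ℂ_p be a continuous function. Then the fermionic p-adic integral of f exists; that is, the sequence N ↦ Σ_{x=0}^{p^N - 1} (-1)^x f(x) converges in ℂ_p as N → ∞. -/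
open Filter Finset

private lemma sum_range_mul_block {K : Type*} [AddCommMonoid K] (g : ℕ → K) (n : ℕ) :
    ∀ m : ℕ, ∑ x ∈ range (n * m), g x = ∑ i ∈ range m, ∑ j ∈ range n, g (n * i + j) := by
  intro m
  induction m with
  | zero => simp
  | succ m ih =>
    rw [Nat.mul_succ, Finset.sum_range_add, ih, Finset.sum_range_succ]

/-- Existence of the fermionic p-adic integral `I_{-1}(f)`: for an odd prime `p` and a
continuous function `f : ℤ_p → ℂ_p`, the sequence `N ↦ Σ_{x=0}^{p^N-1} (-1)^x f(x)`
converges.  Here `ℂ_p` (the completion of an algebraic closure of `ℚ_p`) is modelled as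
a complete nonarchimedean normed field `K` equipped with an isometric `ℚ_p`-algebra
structure. -/
theorem stmt9 (p : ℕ) [Fact p.Prime] (hp : Odd p)
    (K : Type*) [NormedField K] [CompleteSpace K] [IsUltrametricDist K]
    [NormedAlgebra ℚ_[p] K] (hiso : ∀ r : ℚ_[p], ‖algebraMap ℚ_[p] K r‖ = ‖r‖)
    (f : ℤ_[p] → K) (hf : Continuous f) :
    ∃ L : K, Tendsto (fun N : ℕ => ∑ x ∈ range (p ^ N), (-1 : K) ^ x * f (x : ℤ_[p]))
      atTop (nhds L) := by
  set S : ℕ → K := fun N => ∑ x ∈ range (p ^ N), (-1 : K) ^ x * f (x : ℤ_[p]) with hS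
  have hp1 : (1 : ℝ) < p := by exact_mod_cast (Fact.out : p.Prime).one_lt
  -- uniform continuity of f on the compact space ℤ_p
  have huc : UniformContinuous f := CompactSpace.uniformContinuous_of_continuous hf
  -- key estimate on consecutive differences
  have key : ∀ ε : ℝ, 0 < ε → ∃ M : ℕ, ∀ N ≥ M, ‖S (N + 1) - S N‖ ≤ ε := by
    intro ε hε
    obtain ⟨δ, hδ, hδf⟩ := Metric.uniformContinuous_iff.mp huc ε hε
    obtain ⟨M, hM⟩ : ∃ M : ℕ, ((p : ℝ)⁻¹) ^ M < δ := by
      have h1 : (p : ℝ)⁻¹ < 1 := inv_lt_one_of_one_lt₀ hp1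
      have h0 : (0 : ℝ) ≤ (p : ℝ)⁻¹ := by positivity
      exact exists_pow_lt_of_lt_one hδ h1
    refine ⟨M, fun N hN => ?_⟩
    -- rewrite S (N+1) as a double sum over blocks
    have hodd : Odd (p ^ N) := hp.pow
    have hblock : S (N + 1) =
        ∑ i ∈ range p, ∑ y ∈ range (p ^ N),
          (-1 : K) ^ i * ((-1 : K) ^ y * f ((p ^ N * i + y : ℕ) : ℤ_[p])) := by
      have : p ^ (N + 1) = p ^ N * p := by ring
      rw [hS]
      simp only
      rw [this, sum_range_mul_block (fun x => (-1 : K) ^ x * f (x : ℤ_[p])) (p ^ N) p]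
      refine Finset.sum_congr rfl fun i _ => Finset.sum_congr rfl fun y _ => ?_
      have : (-1 : K) ^ (p ^ N * i + y) = (-1 : K) ^ i * (-1 : K) ^ y := by
        rw [pow_add, pow_mul, hodd.neg_one_pow]
      rw [this, mul_assoc]
    -- rewrite S N with the geometric sum Σ_{i<p} (-1)^i = 1
    have hgeom : ∑ i ∈ range p, (-1 : K) ^ i = 1 := by
      rw [neg_one_geom_sum, if_neg (Nat.not_even_iff_odd.mpr hp)]
    have hSN : S N =
        ∑ i ∈ range p, ∑ y ∈ range (p ^ N),
          (-1 : K) ^ i * ((-1 : K) ^ y * f ((y : ℕ) : ℤ_[p])) := by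
      calc S N = (∑ i ∈ range p, (-1 : K) ^ i) * S N := by rw [hgeom, one_mul]
        _ = ∑ i ∈ range p, (-1 : K) ^ i * S N := by rw [Finset.sum_mul]
        _ = _ := by rw [hS]; simp only [Finset.mul_sum]
    rw [hblock, hSN, ← Finset.sum_sub_distrib]
    refine IsUltrametricDist.norm_sum_le_of_forall_le_of_nonneg hε.le fun i _ => ?_
    rw [← Finset.sum_sub_distrib]
    refine IsUltrametricDist.norm_sum_le_of_forall_le_of_nonneg hε.le fun y _ => ?_
    rw [← mul_sub, ← mul_sub, norm_mul, norm_mul, norm_pow, norm_pow, norm_neg, norm_one,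
      one_pow, one_pow, one_mul, one_mul]
    rw [← dist_eq_norm]
    refine le_of_lt (hδf ?_)
    -- distance estimate in ℤ_p
    have hcast : ((p ^ N * i + y : ℕ) : ℤ_[p]) - ((y : ℕ) : ℤ_[p]) = (p : ℤ_[p]) ^ N * i := by
      push_cast; ring
    have hnorm : ‖((p ^ N * i + y : ℕ) : ℤ_[p]) - ((y : ℕ) : ℤ_[p])‖ ≤ ((p : ℝ)⁻¹) ^ M := by
      rw [hcast]
      calc ‖(p : ℤ_[p]) ^ N * (i : ℤ_[p])‖ ≤ ‖(p : ℤ_[p]) ^ N‖ * ‖(i : ℤ_[p])‖ := norm_mul_le _ _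
        _ ≤ ‖(p : ℤ_[p]) ^ N‖ * 1 := by
            exact mul_le_mul_of_nonneg_left (PadicInt.norm_le_one _) (norm_nonneg _)
        _ = ((p : ℝ)⁻¹) ^ N := by
            rw [mul_one, PadicInt.norm_p_pow, inv_pow, ← zpow_natCast, ← zpow_neg]
        _ ≤ ((p : ℝ)⁻¹) ^ M := by
            apply pow_le_pow_of_le_one (by positivity) (inv_le_one_of_one_le₀ hp1.le) hN
    calc dist ((p ^ N * i + y : ℕ) : ℤ_[p]) ((y : ℕ) : ℤ_[p])
        = ‖((p ^ N * i + y : ℕ) : ℤ_[p]) - ((y : ℕ) : ℤ_[p])‖ := dist_eq_norm _ _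
      _ ≤ ((p : ℝ)⁻¹) ^ M := hnorm
      _ < δ := hM
  -- Cauchy sequence via the ultrametric inequality
  have hcauchy : CauchySeq S := by
    rw [Metric.cauchySeq_iff']
    intro ε hε
    obtain ⟨M, hM⟩ := key (ε / 2) (by positivity)
    refine ⟨M, fun n hn => ?_⟩
    have : ∀ n ≥ M, ‖S n - S M‖ ≤ ε / 2 := by
      intro n hn
      induction n, hn using Nat.le_induction with
      | base => simp [norm_nonneg]; positivity
      | succ n hn ih =>
        have h1 : S (n + 1) - S M = (S (n + 1) - S n) + (S n - S M) := by ring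
        rw [h1]
        exact le_trans (IsUltrametricDist.norm_add_le_max _ _)
          (max_le (hM n hn) ih)
    calc dist (S n) (S M) = ‖S n - S M‖ := dist_eq_norm _ _
      _ ≤ ε / 2 := this n hn
      _ < ε := by linarith
  exact cauchySeq_tendsto_of_complete hcauchy
end

section
/- Let p be an odd prime, let f : ℤ_p → ℂ_p be a continuous function, let n be a positive integer, and suppose the sequence N ↦ Σ_{x=0}^{p^N - 1} (-1)^x f(x) converges to L ∈ ℂ_p. Then the sequence N ↦ Σ_{x=0}^{p^N - 1} (-1)^x f(x+n) converges to (-1)^n L + 2 Σ_{l=0}^{n-1} (-1)^{n-1-l} f(l); that is, I_{-1}(f_n) = (-1)^n I_{-1}(f) + 2 Σ_{l=0}^{n-1} (-1)^{n-1-l} f(l) where f_n(x) := f(x+n). -/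
open Filter Finset

lemma fermionic_step (p : ℕ) [Fact p.Prime] (hp : Odd p)
    (K : Type*) [NormedField K]
    (f : ℤ_[p] → K) (hf : Continuous f) (M : K)
    (h : Tendsto (fun N : ℕ => ∑ x ∈ range (p ^ N), (-1 : K) ^ x * f (x : ℤ_[p]))
      atTop (nhds M)) :
    Tendsto (fun N : ℕ => ∑ x ∈ range (p ^ N), (-1 : K) ^ x * f ((x : ℤ_[p]) + 1))
      atTop (nhds (-M + 2 * f 0)) := by
  have key : ∀ N : ℕ, ∑ x ∈ range (p ^ N), (-1 : K) ^ x * f ((x : ℤ_[p]) + 1)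
      = -(∑ x ∈ range (p ^ N), (-1 : K) ^ x * f (x : ℤ_[p]))
        + f (((p ^ N : ℕ) : ℤ_[p])) + f 0 := by
    intro N
    have hodd : Odd (p ^ N) := hp.pow
    have e1 : ∑ x ∈ range (p ^ N + 1), (-1 : K) ^ x * f (x : ℤ_[p])
        = (∑ x ∈ range (p ^ N), (-1 : K) ^ x * f (x : ℤ_[p]))
          + (-1) * f (((p ^ N : ℕ) : ℤ_[p])) := by
      rw [Finset.sum_range_succ, hodd.neg_one_pow]
    have e2 : ∑ x ∈ range (p ^ N + 1), (-1 : K) ^ x * f (x : ℤ_[p])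
        = (∑ x ∈ range (p ^ N), (-1 : K) ^ (x + 1) * f ((x : ℤ_[p]) + 1)) + f 0 := by
      rw [Finset.sum_range_succ' (fun x => (-1 : K) ^ x * f (x : ℤ_[p])) (p ^ N)]
      push_cast
      norm_num
    have e3 : ∑ x ∈ range (p ^ N), (-1 : K) ^ (x + 1) * f ((x : ℤ_[p]) + 1)
        = -∑ x ∈ range (p ^ N), (-1 : K) ^ x * f ((x : ℤ_[p]) + 1) := by
      rw [← Finset.sum_neg_distrib]
      exact Finset.sum_congr rfl fun x _ => by ring
    linear_combination e2 + e3 - e1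
  have hsmall : Tendsto (fun N : ℕ => (((p ^ N : ℕ) : ℤ_[p]))) atTop (nhds 0) := by
    have h1 : ‖((p : ℤ_[p]))‖ < 1 := by
      rw [PadicInt.norm_p]
      have := (Fact.out : p.Prime).two_le
      rw [inv_lt_one_iff₀]
      right
      exact_mod_cast by omega
    have := tendsto_pow_atTop_nhds_zero_of_norm_lt_one h1
    simpa using this
  have h2 : Tendsto (fun N : ℕ => f (((p ^ N : ℕ) : ℤ_[p]))) atTop (nhds (f 0)) :=
    (hf.tendsto 0).comp hsmall
  have := (h.neg.add h2).add (tendsto_const_nhds (x := f 0))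
  have heq : -M + f 0 + f 0 = -M + 2 * f 0 := by ring
  rw [heq] at this
  exact this.congr fun N => (key N).symm

/-- The iterated functional equation of the fermionic p-adic integral: for `n ≥ 1`,
`I_{-1}(f_n) = (-1)^n I_{-1}(f) + 2 Σ_{l=0}^{n-1} (-1)^{n-1-l} f(l)` where
`f_n(x) = f(x+n)`.  Here `ℂ_p` is modelled as a complete nonarchimedean normed field
`K` equipped with an isometric `ℚ_p`-algebra structure. -/
theorem stmt11 (p : ℕ) [Fact p.Prime] (hp : Odd p)
    (K : Type*) [NormedField K] [CompleteSpace K] [IsUltrametricDist K]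
    [NormedAlgebra ℚ_[p] K] (hiso : ∀ r : ℚ_[p], ‖algebraMap ℚ_[p] K r‖ = ‖r‖)
    (f : ℤ_[p] → K) (hf : Continuous f) (n : ℕ) (hn : 0 < n) (L : K)
    (hL : Tendsto (fun N : ℕ => ∑ x ∈ range (p ^ N), (-1 : K) ^ x * f (x : ℤ_[p]))
      atTop (nhds L)) :
    Tendsto (fun N : ℕ => ∑ x ∈ range (p ^ N), (-1 : K) ^ x * f ((x : ℤ_[p]) + n))
      atTop (nhds ((-1 : K) ^ n * L +
        2 * ∑ l ∈ range n, (-1 : K) ^ (n - 1 - l) * f (l : ℤ_[p]))) := by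
  induction n, hn using Nat.le_induction with
  | base =>
      have := fermionic_step p hp K f hf L hL
      simpa using this
  | succ n hn ih =>
      have hg : Continuous (fun x : ℤ_[p] => f (x + (n : ℤ_[p]))) :=
        hf.comp (continuous_id.add continuous_const)
      have step := fermionic_step p hp K (fun x => f (x + (n : ℤ_[p]))) hg _ ih
      have hfun : ∀ N : ℕ, ∑ x ∈ range (p ^ N), (-1 : K) ^ x
            * (fun y : ℤ_[p] => f (y + (n : ℤ_[p]))) ((x : ℤ_[p]) + 1)
          = ∑ x ∈ range (p ^ N), (-1 : K) ^ x * f ((x : ℤ_[p]) + ((n + 1 : ℕ) : ℤ_[p])) := by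
        intro N
        refine Finset.sum_congr rfl fun x _ => ?_
        simp only []
        push_cast
        ring_nf
      have hconst :
          -((-1 : K) ^ n * L + 2 * ∑ l ∈ range n, (-1 : K) ^ (n - 1 - l) * f (l : ℤ_[p]))
            + 2 * f ((0 : ℤ_[p]) + (n : ℤ_[p]))
          = (-1 : K) ^ (n + 1) * L
            + 2 * ∑ l ∈ range (n + 1), (-1 : K) ^ (n + 1 - 1 - l) * f (l : ℤ_[p]) := by
        rw [Finset.sum_range_succ]
        have hsum : ∑ l ∈ range n, (-1 : K) ^ (n + 1 - 1 - l) * f (l : ℤ_[p])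
            = -∑ l ∈ range n, (-1 : K) ^ (n - 1 - l) * f (l : ℤ_[p]) := by
          rw [← Finset.sum_neg_distrib]
          refine Finset.sum_congr rfl fun l hl => ?_
          have hl' : l < n := Finset.mem_range.mp hl
          have : n + 1 - 1 - l = (n - 1 - l) + 1 := by omega
          rw [this, pow_succ]
          ring
        rw [hsum]
        simp
        ring
      rw [hconst] at step
      exact step.congr (hfun)
end

section
/- Let p be an odd prime, r a positive integer, and let w ∈ ℂ_p satisfy w^{p^r} = 1. Then 1 + w ≠ 0, and the sequence N ↦ Σ_{x=0}^{p^N - 1} (-1)^x w^x converges in ℂ_p to 2/(1+w); that is, the fermionic p-adic integral of the twist function φ_w equals 2/(1+w). -/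
open Filter Finset

/-- The fermionic p-adic integral of the twist function `φ_w(x) = w^x` for a `p^r`-th
root of unity `w`: one has `1 + w ≠ 0` and
`Σ_{x=0}^{p^N-1} (-1)^x w^x → 2/(1+w)`.  Here `ℂ_p` is modelled as a complete
nonarchimedean normed field `K` equipped with an isometric `ℚ_p`-algebra structure. -/
theorem stmt12 (p : ℕ) [Fact p.Prime] (hp : Odd p)
    (K : Type*) [NormedField K] [CompleteSpace K] [IsUltrametricDist K]
    [NormedAlgebra ℚ_[p] K] (hiso : ∀ r : ℚ_[p], ‖algebraMap ℚ_[p] K r‖ = ‖r‖)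
    (r : ℕ) (hr : 0 < r) (w : K) (hw : w ^ (p ^ r) = 1) :
    1 + w ≠ 0 ∧
    Tendsto (fun N : ℕ => ∑ x ∈ range (p ^ N), (-1 : K) ^ x * w ^ x)
      atTop (nhds (2 / (1 + w))) := by
  have h2 : (2 : K) ≠ 0 := by
    intro h
    have : ‖(2 : K)‖ = ‖(2 : ℚ_[p])‖ := by
      rw [← hiso 2, map_ofNat]
    rw [h, norm_zero] at this
    have h2p : (2 : ℚ_[p]) ≠ 0 := by norm_num
    exact h2p (norm_eq_zero.mp this.symm)
  have h1 : 1 + w ≠ 0 := by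
    intro h
    have hw1 : w = -1 := by linear_combination h
    rw [hw1, (hp.pow : Odd (p ^ r)).neg_one_pow] at hw
    apply h2
    linear_combination -hw
  refine ⟨h1, ?_⟩
  have hne : -w ≠ 1 := fun h => h1 (by linear_combination -h)
  apply tendsto_atTop_of_eventually_const (i₀ := r)
  intro N hN
  have hwN : w ^ (p ^ N) = 1 := by
    have : p ^ N = p ^ r * p ^ (N - r) := by
      rw [← pow_add]
      congr 1
      omega
    rw [this, pow_mul, hw, one_pow]
  simp_rw [← mul_pow, neg_one_mul]
  calc ∑ x ∈ range (p ^ N), (-w) ^ x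
      = ((-w) ^ (p ^ N) - 1) / (-w - 1) := geom_sum_eq hne _
    _ = 2 / (1 + w) := by
        rw [(hp.pow : Odd (p ^ N)).neg_pow, hwN]
        rw [show (-1 - 1 : K) = -2 by ring, show -w - 1 = -(1 + w) by ring,
          neg_div_neg_eq]
end

section
/- Let p be an odd prime, r a positive integer, w ∈ ℂ_p with w^{p^r} = 1, let f be an odd positive integer, and let χ be a Dirichlet character modulo f with values in ℂ_p. Then 1 + w^f ≠ 0, and the sequence N ↦ Σ_{x=0}^{f·p^N - 1} (-1)^x χ(x) w^x converges in ℂ_p to 2 · (Σ_{i=0}^{f-1} (-1)^i χ(i) w^i) / (1 + w^f). -/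
open Filter Finset

lemma stmt13_sum_range_mul {M : Type*} [AddCommMonoid M] (g : ℕ → M) (a b : ℕ) :
    ∑ x ∈ range (a * b), g x = ∑ k ∈ range b, ∑ i ∈ range a, g (a * k + i) := by
  induction b with
  | zero => simp
  | succ b ih =>
    rw [Nat.mul_succ, Finset.sum_range_add, ih, Finset.sum_range_succ]

/-- The fermionic p-adic integral of `x ↦ χ(x) w^x` for a Dirichlet character `χ` of odd
conductor `f` and a `p^r`-th root of unity `w`: one has `1 + w^f ≠ 0` and
`Σ_{x=0}^{f·p^N-1} (-1)^x χ(x) w^x → 2 (Σ_{i=0}^{f-1} (-1)^i χ(i) w^i)/(1 + w^f)`.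
Here `ℂ_p` is modelled as a complete nonarchimedean normed field `K` equipped with an
isometric `ℚ_p`-algebra structure. -/
theorem stmt13 (p : ℕ) [Fact p.Prime] (hp : Odd p)
    (K : Type*) [NormedField K] [CompleteSpace K] [IsUltrametricDist K]
    [NormedAlgebra ℚ_[p] K] (hiso : ∀ r : ℚ_[p], ‖algebraMap ℚ_[p] K r‖ = ‖r‖)
    (r : ℕ) (hr : 0 < r) (w : K) (hw : w ^ (p ^ r) = 1)
    (f : ℕ) (hf : Odd f) (hf0 : 0 < f) (χ : DirichletCharacter K f) :
    1 + w ^ f ≠ 0 ∧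
    Tendsto (fun N : ℕ => ∑ x ∈ range (f * p ^ N),
        (-1 : K) ^ x * χ ((x : ℕ) : ZMod f) * w ^ x)
      atTop (nhds (2 * (∑ i ∈ range f, (-1 : K) ^ i * χ ((i : ℕ) : ZMod f) * w ^ i) /
        (1 + w ^ f))) := by
  haveI : CharZero K := charZero_of_injective_algebraMap (algebraMap ℚ_[p] K).injective
  have hpr : Odd (p ^ r) := hp.pow
  have hne : 1 + w ^ f ≠ 0 := by
    intro h
    have hwf : w ^ f = -1 := by linear_combination h
    have h1 : ((-1 : K)) ^ (p ^ r) = 1 := by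
      rw [← hwf, ← pow_mul, mul_comm, pow_mul, hw, one_pow]
    rw [hpr.neg_one_pow] at h1
    norm_num at h1
  refine ⟨hne, ?_⟩
  have hu : (-(w ^ f)) ≠ 1 := by
    intro h
    apply hne
    rw [show w ^ f = -1 by linear_combination -h]
    ring
  set S : K := ∑ i ∈ range f, (-1 : K) ^ i * χ ((i : ℕ) : ZMod f) * w ^ i with hS
  have key : ∀ N, r ≤ N → (∑ x ∈ range (f * p ^ N),
      (-1 : K) ^ x * χ ((x : ℕ) : ZMod f) * w ^ x) = 2 * S / (1 + w ^ f) := by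
    intro N hN
    rw [stmt13_sum_range_mul]
    have hterm : ∀ k i : ℕ, i < f →
        (-1 : K) ^ (f * k + i) * χ (((f * k + i : ℕ) : ZMod f)) * w ^ (f * k + i)
        = (-(w ^ f)) ^ k * ((-1 : K) ^ i * χ ((i : ℕ) : ZMod f) * w ^ i) := by
      intro k i _
      have hc : (((f * k + i : ℕ) : ZMod f)) = ((i : ℕ) : ZMod f) := by
        push_cast
        simp [ZMod.natCast_self]
      rw [hc, pow_add, pow_add, pow_mul, pow_mul, hf.neg_one_pow, neg_pow]
      ring
    have hrow : ∀ k ∈ range (p ^ N), (∑ i ∈ range f,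
        (-1 : K) ^ (f * k + i) * χ (((f * k + i : ℕ) : ZMod f)) * w ^ (f * k + i))
        = (-(w ^ f)) ^ k * S := by
      intro k _
      rw [hS, Finset.mul_sum]
      exact Finset.sum_congr rfl fun i hi => hterm k i (Finset.mem_range.1 hi)
    rw [Finset.sum_congr rfl hrow, ← Finset.sum_mul, geom_sum_eq hu]
    have hwN : (-(w ^ f)) ^ (p ^ N) = -1 := by
      rw [neg_pow, (hp.pow : Odd (p ^ N)).neg_one_pow, ← pow_mul,
        show f * p ^ N = p ^ r * (f * p ^ (N - r)) by
          rw [← mul_assoc, mul_comm (p ^ r) f, mul_assoc, ← pow_add,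
            Nat.add_sub_cancel' hN],
        pow_mul, hw, one_pow, mul_one]
    rw [hwN]
    have h2 : (-(w ^ f)) - 1 = -(1 + w ^ f) := by ring
    rw [h2, ← neg_add', neg_div_neg_eq, div_mul_eq_mul_div]
    norm_num
  refine Tendsto.congr' ?_ tendsto_const_nhds
  filter_upwards [eventually_ge_atTop r] with N hN
  exact (key N hN).symm
end

section
/- Let p be an odd prime, let q ∈ ℂ_p satisfy 0 < |q - 1|_p < 1, let r be a positive integer, let w ∈ ℂ_p satisfy w^{p^r} = 1, let h be an integer, and let n be a nonnegative integer. Then for every 0 ≤ j ≤ n one has 1 + q^{h+j} w ≠ 0, and the sequence N ↦ ((1+q)/(1 - (-q)^{p^N})) · Σ_{x=0}^{p^N - 1} (-q)^x q^{(h-1)x} w^x [x]_q^n converges in ℂ_p to ((1+q)/(1-q)^n) · Σ_{j=0}^n binom(n,j) (-1)^j / (1 + q^{h+j} w). In other words, the twisted q-Euler number E^{(h,1)}_{n,w,q} defined by the fermionic p-adic q-integral E^{(h,1)}_{n,w,q} = ∫_{ℤ_p} q^{(h-1)x} w^x [x]_q^n dμ_{-q}(x) admits the explicit closed form ((1+q)/(1-q)^n)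 · Σ_{j=0}^n binom(n,j) (-1)^j / (1 + q^{h+j} w). -/
open Filter Finset

section AuxStmt14

variable {K : Type*} [NormedField K] [IsUltrametricDist K]

private lemma stmt14_norm_eq {a b : K} (h : ‖a - b‖ < ‖b‖) : ‖a‖ = ‖b‖ := by
  have ha : ‖a‖ ≤ max ‖a - b‖ ‖b‖ := by
    calc ‖a‖ = ‖(a - b) + b‖ := by rw [sub_add_cancel]
    _ ≤ _ := IsUltrametricDist.norm_add_le_max _ _
  have h1 : ‖a‖ ≤ ‖b‖ := ha.trans (max_le h.le le_rfl)
  refine le_antisymm h1 (le_of_not_gt fun hlt => ?_)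
  have hb : ‖b‖ ≤ max ‖a‖ ‖a - b‖ := by
    calc ‖b‖ = ‖a + -(a - b)‖ := by rw [← sub_eq_add_neg, sub_sub_cancel]
    _ ≤ max ‖a‖ ‖-(a-b)‖ := IsUltrametricDist.norm_add_le_max _ _
    _ = max ‖a‖ ‖a - b‖ := by rw [norm_neg]
  exact absurd hb (not_le.mpr (max_lt hlt h))

private lemma stmt14_pow_sub_one {u : K} (hu : ‖u‖ ≤ 1) (m : ℕ) :
    ‖u ^ m - 1‖ ≤ ‖u - 1‖ := by
  induction m with
  | zero => simpa using norm_nonneg (u - 1)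
  | succ m ih =>
    have hrw : u ^ (m + 1) - 1 = (u ^ m - 1) * u + (u - 1) := by ring
    rw [hrw]
    refine (IsUltrametricDist.norm_add_le_max _ _).trans (max_le ?_ le_rfl)
    calc ‖(u ^ m - 1) * u‖ = ‖u ^ m - 1‖ * ‖u‖ := norm_mul _ _
    _ ≤ ‖u - 1‖ * 1 := mul_le_mul ih hu (norm_nonneg _) (norm_nonneg _)
    _ = ‖u - 1‖ := mul_one _

private lemma stmt14_zpow_sub_one {u : K} (hu : ‖u‖ = 1) (m : ℤ) :
    ‖u ^ m - 1‖ ≤ ‖u - 1‖ := by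
  have hu0 : u ≠ 0 := by intro h; rw [h, norm_zero] at hu; exact zero_ne_one hu
  obtain ⟨k, hk | hk⟩ := m.eq_nat_or_neg
  · rw [hk, zpow_natCast]; exact stmt14_pow_sub_one hu.le k
  · rw [hk, zpow_neg]
    have hne : u ^ (k : ℤ) ≠ 0 := zpow_ne_zero _ hu0
    have hrw : (u ^ (k : ℤ))⁻¹ - 1 = (1 - u ^ (k : ℤ)) * (u ^ (k : ℤ))⁻¹ := by
      field_simp
    rw [hrw, norm_mul, norm_inv, norm_zpow, hu, one_zpow, inv_one, mul_one,
      ← norm_neg, neg_sub, zpow_natCast]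
    exact stmt14_pow_sub_one hu.le k

end AuxStmt14

/-- Closed form for the twisted q-Euler number defined by the fermionic p-adic
q-integral: for `q ∈ ℂ_p` with `0 < |q-1|_p < 1`, a `p^r`-th root of unity `w`, an
integer `h` and `n ≥ 0`, each `1 + q^{h+j} w` with `0 ≤ j ≤ n` is nonzero and
`((1+q)/(1-(-q)^{p^N})) Σ_{x=0}^{p^N-1} (-q)^x q^{(h-1)x} w^x [x]_q^n` converges to
`((1+q)/(1-q)^n) Σ_{j=0}^n C(n,j) (-1)^j / (1 + q^{h+j} w)`.  Here `ℂ_p` is modelled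
as a complete nonarchimedean normed field `K` equipped with an isometric
`ℚ_p`-algebra structure. -/
theorem stmt14 (p : ℕ) [Fact p.Prime] (hp : Odd p)
    (K : Type*) [NormedField K] [CompleteSpace K] [IsUltrametricDist K]
    [NormedAlgebra ℚ_[p] K] (hiso : ∀ r : ℚ_[p], ‖algebraMap ℚ_[p] K r‖ = ‖r‖)
    (q : K) (hq0 : 0 < ‖q - 1‖) (hq1 : ‖q - 1‖ < 1)
    (r : ℕ) (hr : 0 < r) (w : K) (hw : w ^ (p ^ r) = 1) (h : ℤ) (n : ℕ) :
    (∀ j : ℕ, j ≤ n → 1 + q ^ (h + j : ℤ) * w ≠ 0) ∧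
    Tendsto (fun N : ℕ => ((1 + q) / (1 - (-q) ^ (p ^ N))) *
        ∑ x ∈ range (p ^ N),
          (-q) ^ x * q ^ ((h - 1) * x : ℤ) * w ^ x * ((1 - q ^ x) / (1 - q)) ^ n)
      atTop (nhds (((1 + q) / (1 - q) ^ n) *
        ∑ j ∈ range (n + 1), (n.choose j : K) * (-1 : K) ^ j / (1 + q ^ (h + j : ℤ) * w))) := by
  have hpprime := Fact.out (p := p.Prime)
  -- basic norm facts
  have hintK : ∀ m : ℤ, ‖(m : K)‖ ≤ 1 := fun m => by
    rw [show ((m : K)) = algebraMap ℚ_[p] K (m : ℚ_[p]) by rw [map_intCast], hiso]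
    exact Padic.norm_int_le_one m
  have hnatK : ∀ m : ℕ, ‖(m : K)‖ ≤ 1 := fun m => by
    have := hintK (m : ℤ); push_cast at this; exact this
  have hpK : ‖(p : K)‖ < 1 := by
    rw [show ((p : K)) = algebraMap ℚ_[p] K (p : ℚ_[p]) by rw [map_natCast], hiso,
      Padic.norm_p]
    rw [inv_lt_one_iff₀]
    right
    exact_mod_cast hpprime.one_lt
  have h2K : ‖(2 : K)‖ = 1 := by
    refine le_antisymm (by exact_mod_cast hnatK 2) (le_of_not_gt fun hlt => ?_)
    rw [show ((2 : K)) = (((2 : ℤ) : K)) by push_cast; ring] at hlt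
    rw [show (((2:ℤ) : K)) = algebraMap ℚ_[p] K ((2:ℤ) : ℚ_[p]) by rw [map_intCast], hiso] at hlt
    have hdvd : (p : ℤ) ∣ 2 := (Padic.norm_intCast_lt_one_iff (k := 2)).mp hlt
    have hd2 : p ∣ 2 := by exact_mod_cast hdvd
    have : p = 2 := (Nat.prime_dvd_prime_iff_eq hpprime Nat.prime_two).mp hd2
    rw [this] at hp
    exact absurd hp (by decide)
  have h2K0 : (2 : K) ≠ 0 := by
    intro h0; rw [h0, norm_zero] at h2K; exact zero_ne_one h2K
  have hqnorm : ‖q‖ = 1 := by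
    have := stmt14_norm_eq (a := q) (b := (1 : K)) (by simpa using hq1)
    simpa using this
  have hqne : q ≠ 0 := by
    intro h0; rw [h0, norm_zero] at hqnorm; exact zero_ne_one hqnorm
  have h1q : (1 : K) - q ≠ 0 := by
    intro h0
    have : q - 1 = 0 := by linear_combination -h0
    rw [this, norm_zero] at hq0; exact lt_irrefl 0 hq0
  -- root of unity is close to 1
  have hwnorm1 : ‖w‖ ≤ 1 := by
    by_contra hlt
    push_neg at hlt
    have : (1 : ℝ) < ‖w‖ ^ (p ^ r) := one_lt_pow₀ hlt (pow_ne_zero r hpprime.ne_zero)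
    rw [← norm_pow, hw, norm_one] at this
    exact lt_irrefl 1 this
  obtain ⟨m, hm⟩ := Nat.exists_eq_succ_of_ne_zero hpprime.ne_zero
  have hstep : ∀ v : K, ‖v‖ ≤ 1 → ‖v ^ p - 1‖ < 1 → ‖v - 1‖ < 1 := by
    intro v hv hvp
    have hsub : (v - 1) ^ p = ∑ i ∈ range (p+1), v ^ i * (-1:K)^(p-i) * (p.choose i) := by
      have := add_pow v (-1 : K) p
      rw [show v + (-1:K) = v - 1 by ring] at this
      exact this
    have hpeel : (v - 1) ^ p = (v ^ p - 1) +
        ∑ i ∈ range m, v ^ (i+1) * (-1:K)^(p-(i+1)) * (p.choose (i+1)) := by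
      rw [hsub, Finset.sum_range_succ, hm, Finset.sum_range_succ']
      have hodd : (-1 : K) ^ (m + 1) = -1 := by
        have hpodd : Odd (m + 1) := by rw [hm] at hp; exact hp
        exact hpodd.neg_one_pow
      simp only [Nat.sub_self, pow_zero, mul_one, Nat.choose_self, Nat.cast_one,
        Nat.choose_zero_right, Nat.sub_zero, hodd]
      ring
    have hmid : ‖∑ i ∈ range m, v ^ (i+1) * (-1:K)^(p-(i+1)) * (p.choose (i+1))‖ ≤ ‖(p:K)‖ := by
      refine IsUltrametricDist.norm_sum_le_of_forall_le_of_nonneg (norm_nonneg _) ?_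
      intro i hi
      have hi' : i + 1 < p := by
        rw [hm]; exact Nat.succ_lt_succ (Finset.mem_range.mp hi)
      obtain ⟨t, ht⟩ := hpprime.dvd_choose_self (Nat.succ_ne_zero i) hi'
      rw [ht]
      push_cast
      rw [norm_mul, norm_mul, norm_mul, norm_pow]
      calc ‖v‖ ^ (i+1) * ‖(-1:K)^(p-(i+1))‖ * (‖(p:K)‖ * ‖(t:K)‖)
          ≤ 1 * 1 * (‖(p:K)‖ * 1) := by
            gcongr
            · exact pow_le_one₀ (norm_nonneg v) hv
            · rw [norm_pow, norm_neg, norm_one, one_pow]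
            · exact hnatK t
      _ = ‖(p:K)‖ := by ring
    have hlt1 : ‖(v - 1) ^ p‖ < 1 := by
      rw [hpeel]
      refine lt_of_le_of_lt (IsUltrametricDist.norm_add_le_max _ _) ?_
      exact max_lt hvp (lt_of_le_of_lt hmid hpK)
    rw [norm_pow] at hlt1
    exact (pow_lt_one_iff_of_nonneg (norm_nonneg _) hpprime.ne_zero).mp hlt1
  have hroot : ∀ s : ℕ, ∀ v : K, ‖v‖ ≤ 1 → v ^ (p ^ s) = 1 → ‖v - 1‖ < 1 := by
    intro s
    induction s with
    | zero => intro v _ hv1; simp at hv1; simp [hv1]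
    | succ s ih =>
      intro v hv hv1
      refine hstep v hv (ih (v ^ p) ?_ ?_)
      · rw [norm_pow]; exact pow_le_one₀ (norm_nonneg v) hv
      · rw [← pow_mul, ← pow_succ']; exact hv1
  have hw1 : ‖w - 1‖ < 1 := hroot r w hwnorm1 hw
  -- the key nonvanishing facts
  set z : ℕ → K := fun j => q ^ (h + (j:ℤ)) * w with hz_def
  have hqz : ∀ m : ℤ, ‖q ^ m‖ = 1 := fun m => by rw [norm_zpow, hqnorm, one_zpow]
  have hz1 : ∀ j : ℕ, ‖z j - 1‖ < 1 := by
    intro j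
    have hrw : z j - 1 = q ^ (h + (j:ℤ)) * (w - 1) + (q ^ (h + (j:ℤ)) - 1) := by
      simp only [hz_def]; ring
    rw [hrw]
    refine lt_of_le_of_lt (IsUltrametricDist.norm_add_le_max _ _) (max_lt ?_ ?_)
    · rw [norm_mul, hqz, one_mul]; exact hw1
    · exact lt_of_le_of_lt (stmt14_zpow_sub_one hqnorm _) hq1
  have hznorm : ∀ j : ℕ, ‖1 + z j‖ = 1 := by
    intro j
    have := stmt14_norm_eq (a := 1 + z j) (b := (2:K))
      (by rw [show (1 + z j) - 2 = z j - 1 by ring]; rw [h2K]; exact hz1 j)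
    rw [this, h2K]
  have hz0 : ∀ j : ℕ, (1:K) + z j ≠ 0 := by
    intro j h0
    have := hznorm j
    rw [h0, norm_zero] at this
    exact zero_ne_one this
  -- nonvanishing of 1 + q^{p^N}
  have hqM1 : ∀ N : ℕ, ‖q ^ (p ^ N) - 1‖ < 1 := fun N =>
    lt_of_le_of_lt (stmt14_pow_sub_one hqnorm.le _) hq1
  have hqM0 : ∀ N : ℕ, (1:K) + q ^ (p ^ N) ≠ 0 := by
    intro N h0
    have heq : ‖1 + q ^ (p ^ N)‖ = 1 := by
      have := stmt14_norm_eq (a := 1 + q ^ (p ^ N)) (b := (2:K))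
        (by rw [show (1 + q ^ (p ^ N)) - 2 = q ^ (p ^ N) - 1 by ring]; rw [h2K]; exact hqM1 N)
      rw [this, h2K]
    rw [h0, norm_zero] at heq
    exact zero_ne_one heq
  refine ⟨fun j _ => hz0 j, ?_⟩
  -- algebraic identity for every N
  have key : ∀ N : ℕ, ((1 + q) / (1 - (-q) ^ (p ^ N))) *
      ∑ x ∈ range (p ^ N),
        (-q) ^ x * q ^ ((h - 1) * x : ℤ) * w ^ x * ((1 - q ^ x) / (1 - q)) ^ n
      = ((1 + q) / (1 - q) ^ n) *
      ∑ j ∈ range (n + 1), ((n.choose j : K) * (-1:K) ^ j / (1 + z j)) *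
        ((1 + (z j) ^ (p ^ N)) / (1 + q ^ (p ^ N))) := by
    intro N
    set M := p ^ N with hM_def
    have hModd : Odd M := hp.pow
    have hnegq : (1:K) - (-q) ^ M = 1 + q ^ M := by rw [hModd.neg_pow]; ring
    -- pointwise binomial expansion
    have hpt : ∀ x ∈ range M, (-q) ^ x * q ^ ((h - 1) * x : ℤ) * w ^ x * ((1 - q ^ x) / (1 - q)) ^ n
        = ∑ j ∈ range (n + 1), ((n.choose j : K) * (-1:K) ^ j / (1 - q) ^ n) * (-(z j)) ^ x := by
      intro x _
      have hbin : (1 - q ^ x : K) ^ n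
          = ∑ j ∈ range (n + 1), (-(q ^ x)) ^ j * (1:K) ^ (n - j) * (n.choose j) := by
        rw [show (1 - q ^ x : K) = -(q ^ x) + 1 by ring]
        exact add_pow _ _ n
      rw [div_pow, hbin, Finset.sum_div, Finset.mul_sum]
      refine Finset.sum_congr rfl fun j _ => ?_
      have hqpow : q ^ x * q ^ ((h - 1) * (x:ℤ)) * (q ^ x) ^ j = (q ^ (h + (j:ℤ))) ^ x := by
        rw [← pow_mul, ← zpow_natCast q x, ← zpow_natCast q (x * j),
          ← zpow_add₀ hqne, ← zpow_add₀ hqne,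
          ← zpow_natCast (q ^ (h + (j:ℤ))) x, ← zpow_mul]
        congr 1
        push_cast
        ring
      rw [show (-(z j)) ^ x = (-1:K) ^ x * ((q ^ (h + (j:ℤ))) ^ x * w ^ x) by
          rw [neg_pow]; simp only [hz_def, mul_pow], ← hqpow,
        neg_pow q x, neg_pow (q ^ x) j, one_pow]
      ring
    rw [Finset.sum_congr rfl hpt, Finset.sum_comm, hnegq]
    have hgeom : ∀ j ∈ range (n + 1),
        ∑ x ∈ range M, ((n.choose j : K) * (-1:K) ^ j / (1 - q) ^ n) * (-(z j)) ^ x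
        = ((n.choose j : K) * (-1:K) ^ j / (1 - q) ^ n) * ((1 + (z j) ^ M) / (1 + z j)) := by
      intro j _
      rw [← Finset.mul_sum]
      congr 1
      have hne1 : -(z j) ≠ 1 := by
        intro h0
        exact hz0 j (by rw [show z j = -1 by linear_combination -h0]; ring)
      rw [geom_sum_eq hne1, hModd.neg_pow]
      rw [show -(z j) ^ M - 1 = -((z j) ^ M + 1) by ring,
        show -(z j) - 1 = -(1 + z j) by ring, neg_div_neg_eq]
      rw [add_comm ((z j) ^ M) 1]
    rw [Finset.sum_congr rfl hgeom, Finset.mul_sum, Finset.mul_sum]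
    refine Finset.sum_congr rfl fun j _ => ?_
    ring
  -- limits
  have hcnorm : max ‖(p:K)‖ ‖q - 1‖ < 1 := max_lt hpK hq1
  set c : ℝ := max ‖(p:K)‖ ‖q - 1‖ with hc_def
  have hc0 : 0 ≤ c := le_trans (norm_nonneg _) (le_max_right _ _)
  have hkey : ∀ u : K, ‖u‖ = 1 → ‖u - 1‖ ≤ ‖q - 1‖ → ‖u ^ p - 1‖ ≤ c * ‖u - 1‖ := by
    intro u hu hule
    have hgs : u ^ p - 1 = (∑ i ∈ range p, u ^ i) * (u - 1) := (geom_sum_mul u p).symm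
    rw [hgs, norm_mul]
    refine mul_le_mul_of_nonneg_right ?_ (norm_nonneg _)
    have hsplit : ∑ i ∈ range p, u ^ i = (p : K) + ∑ i ∈ range p, (u ^ i - 1) := by
      rw [Finset.sum_sub_distrib]
      simp
    rw [hsplit]
    refine (IsUltrametricDist.norm_add_le_max _ _).trans (max_le ?_ ?_)
    · exact le_max_left _ _
    · refine le_trans (IsUltrametricDist.norm_sum_le_of_forall_le_of_nonneg
        (le_trans (norm_nonneg _) (le_max_right ‖(p:K)‖ _)) fun i _ => ?_) le_rfl
      exact le_trans (stmt14_pow_sub_one hu.le i) (le_trans hule (le_max_right _ _))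
  have hiter : ∀ N : ℕ, ‖q ^ (p ^ N) - 1‖ ≤ c ^ N * ‖q - 1‖ := by
    intro N
    induction N with
    | zero => simp
    | succ N ih =>
      have hcN1 : c ^ N ≤ 1 := pow_le_one₀ hc0 hcnorm.le
      have hle : ‖q ^ (p ^ N) - 1‖ ≤ ‖q - 1‖ := by
        refine ih.trans ?_
        calc c ^ N * ‖q - 1‖ ≤ 1 * ‖q - 1‖ :=
          mul_le_mul_of_nonneg_right hcN1 (norm_nonneg _)
        _ = ‖q - 1‖ := one_mul _
      have hnormN : ‖q ^ (p ^ N)‖ = 1 := by rw [norm_pow, hqnorm, one_pow]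
      have := hkey (q ^ (p ^ N)) hnormN hle
      rw [← pow_mul, ← pow_succ] at this
      refine this.trans ?_
      calc c * ‖q ^ (p ^ N) - 1‖ ≤ c * (c ^ N * ‖q - 1‖) :=
        mul_le_mul_of_nonneg_left ih hc0
      _ = c ^ (N + 1) * ‖q - 1‖ := by ring
  have hlimnorm : Tendsto (fun N : ℕ => ‖q ^ (p ^ N) - 1‖) atTop (nhds 0) := by
    have hbound : Tendsto (fun N : ℕ => c ^ N * ‖q - 1‖) atTop (nhds 0) := by
      have := (tendsto_pow_atTop_nhds_zero_of_lt_one hc0 hcnorm).mul_const ‖q - 1‖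
      simpa using this
    exact squeeze_zero (fun N => norm_nonneg _) hiter hbound
  have hlimq : Tendsto (fun N : ℕ => q ^ (p ^ N)) atTop (nhds 1) := by
    rw [tendsto_iff_norm_sub_tendsto_zero]
    simpa using hlimnorm
  have hlimz : ∀ j : ℕ, Tendsto (fun N : ℕ => (z j) ^ (p ^ N)) atTop (nhds 1) := by
    intro j
    have hA : Tendsto (fun N : ℕ => (q ^ (p ^ N)) ^ (h + (j:ℤ))) atTop (nhds 1) := by
      rw [tendsto_iff_norm_sub_tendsto_zero]
      refine squeeze_zero (fun N => norm_nonneg _) (fun N => ?_) hlimnorm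
      exact stmt14_zpow_sub_one (by rw [norm_pow, hqnorm, one_pow]) _
    refine hA.congr' ?_
    filter_upwards [eventually_ge_atTop r] with N hN
    have hwN : w ^ (p ^ N) = 1 := by
      rw [show p ^ N = p ^ r * p ^ (N - r) by rw [← pow_add, Nat.add_sub_cancel' hN],
        pow_mul, hw, one_pow]
    have hqN : (q ^ (p ^ N)) ^ (h + (j:ℤ)) = (q ^ (h + (j:ℤ))) ^ (p ^ N) := by
      rw [← zpow_natCast q (p ^ N), ← zpow_mul, mul_comm, zpow_mul, zpow_natCast]
    rw [hqN, hz_def]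
    simp only [mul_pow, hwN, mul_one]
  -- assemble the limit
  have hfinal : Tendsto (fun N : ℕ => ((1 + q) / (1 - q) ^ n) *
      ∑ j ∈ range (n + 1), ((n.choose j : K) * (-1:K) ^ j / (1 + z j)) *
        ((1 + (z j) ^ (p ^ N)) / (1 + q ^ (p ^ N)))) atTop
      (nhds (((1 + q) / (1 - q) ^ n) *
        ∑ j ∈ range (n + 1), (n.choose j : K) * (-1 : K) ^ j / (1 + z j))) := by
    have hterm : ∀ j ∈ range (n + 1), Tendsto (fun N : ℕ =>
        ((n.choose j : K) * (-1:K) ^ j / (1 + z j)) *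
          ((1 + (z j) ^ (p ^ N)) / (1 + q ^ (p ^ N)))) atTop
        (nhds ((n.choose j : K) * (-1:K) ^ j / (1 + z j))) := by
      intro j _
      have hdiv : Tendsto (fun N : ℕ => (1 + (z j) ^ (p ^ N)) / (1 + q ^ (p ^ N))) atTop
          (nhds 1) := by
        have h1 : Tendsto (fun N : ℕ => (1 + (z j) ^ (p ^ N))) atTop (nhds (1 + 1)) :=
          tendsto_const_nhds.add (hlimz j)
        have h2 : Tendsto (fun N : ℕ => (1 + q ^ (p ^ N))) atTop (nhds (1 + 1)) :=
          tendsto_const_nhds.add hlimq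
        have h11 : ((1 : K) + 1) ≠ 0 := by rw [show (1:K) + 1 = 2 by norm_num]; exact h2K0
        have := h1.div h2 h11
        rw [div_self h11] at this
        exact this
      have := (tendsto_const_nhds (x := (n.choose j : K) * (-1:K) ^ j / (1 + z j))
        (f := atTop)).mul hdiv
      simpa using this
    exact (tendsto_finset_sum _ hterm).const_mul _
  refine Tendsto.congr (fun N => (key N).symm) hfinal
end

section
/- Let w be a complex root of unity of odd order (so in particular w ≠ -1), let h ≥ 1 be an integer, let x ≥ 0 be a real number, and let n ≥ 0 be an integer. Then as q → 1 from the left within (0,1), the twisted q-Euler polynomial E^{(h,1)}_{n,w,q}(x) = (1+q) · Σ_{k=0}^∞ (-1)^k w^k q^{hk} [x+k]_q^n converges to the classical twisted Euler polynomial E_{n,w}(x), namely to the n-th derivative at t = 0 of the function t ↦ 2 e^{xt}/(w e^t + 1). -/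
open Finset Filter Asymptotics

lemma sumS : ∀ (n : ℕ) (k : ℕ), k ≤ n → ∀ (a : ℂ),
    ∑ j ∈ Finset.range (n+1), (-1:ℂ)^j * (n.choose j) * (a + j)^k
      = if k = n then (-1)^n * (n.factorial : ℂ) else 0 := by
  intro n
  induction n with
  | zero => intro k hk a; interval_cases k; simp
  | succ n IH =>
    intro k hk a
    have key : ∑ j ∈ range (n+2), (-1:ℂ)^j * ((n+1).choose j) * (a+j)^k
        = ∑ j ∈ range (n+1), (-1:ℂ)^j * (n.choose j) * ((a+j)^k - (a+j+1)^k) := by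
      have h1 := Finset.sum_range_succ' (fun j => (-1:ℂ)^j * ((n+1).choose j) * (a+j)^k) (n+1)
      rw [h1]
      have h2 : ∀ j ∈ range (n+1), (-1:ℂ)^(j+1) * (((n+1).choose (j+1) : ℕ) : ℂ) * (a+(j+1:ℕ))^k
          = (-((-1:ℂ)^j * (n.choose j) * (a+j+1)^k))
            + ((-1:ℂ)^(j+1) * (n.choose (j+1)) * (a+((j+1:ℕ):ℂ))^k) := by
        intro j _
        rw [Nat.choose_succ_succ]
        push_cast
        ring
      rw [Finset.sum_congr rfl h2, Finset.sum_add_distrib]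
      have h3 : (∑ j ∈ range (n+1), (-1:ℂ)^(j+1) * (n.choose (j+1)) * (a+((j+1:ℕ):ℂ))^k)
          + (-1:ℂ)^(0:ℕ) * (((n+1).choose 0 : ℕ) : ℂ) * (a+((0:ℕ):ℂ))^k
          = ∑ j ∈ range (n+1), (-1:ℂ)^j * (n.choose j) * (a+j)^k := by
        have h5 : ∑ j ∈ range (n+2), (-1:ℂ)^j * (n.choose j) * (a+j)^k
            = ∑ j ∈ range (n+1), (-1:ℂ)^j * (n.choose j) * (a+j)^k := by
          rw [Finset.sum_range_succ]
          simp [Nat.choose_succ_self]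
        rw [← h5, Finset.sum_range_succ' (fun j => (-1:ℂ)^j * (n.choose j) * (a+j)^k) (n+1)]
        norm_num
      rw [add_assoc, h3, ← Finset.sum_add_distrib]
      refine Finset.sum_congr rfl fun j _ => by ring
    rw [key]
    have h4 : ∀ j ∈ range (n+1), (-1:ℂ)^j * (n.choose j) * ((a+j)^k - (a+j+1)^k)
        = -∑ i ∈ range k, (k.choose i : ℂ) * ((-1:ℂ)^j * (n.choose j) * (a+j)^i) := by
      intro j _
      have hb : (a+j+1)^k = ∑ i ∈ range (k+1), (a+(j:ℂ))^i * 1^(k-i) * (k.choose i) :=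
        add_pow (a+j) 1 k
      rw [hb, Finset.sum_range_succ]
      simp only [one_pow, mul_one, Nat.choose_self, Nat.cast_one]
      rw [show (a+(j:ℂ))^k - (∑ x ∈ range k, (a+(j:ℂ))^x * (k.choose x) + (a+(j:ℂ))^k)
        = -∑ x ∈ range k, (a+(j:ℂ))^x * (k.choose x) from by ring]
      rw [mul_neg, neg_inj, Finset.mul_sum]
      exact Finset.sum_congr rfl fun i _ => by ring
    rw [Finset.sum_congr rfl h4]
    simp only [Finset.sum_neg_distrib]
    rw [Finset.sum_comm]
    have h6 : ∀ i ∈ range k, ∑ x ∈ range (n+1), (k.choose i : ℂ) * ((-1:ℂ)^x * (n.choose x) * (a+x)^i)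
        = (k.choose i : ℂ) * (if i = n then (-1:ℂ)^n * (n.factorial : ℂ) else 0) := by
      intro i hi
      rw [← Finset.mul_sum, IH i (by have := Finset.mem_range.mp hi; omega) a]
    rw [Finset.sum_congr rfl h6]
    simp only [mul_ite, mul_zero]
    rw [Finset.sum_ite_eq' (range k) n (fun i => (k.choose i : ℂ) * ((-1:ℂ)^n * (n.factorial : ℂ)))]
    by_cases hkn : k = n + 1
    · subst hkn
      simp only [Finset.mem_range, Nat.lt_succ_self, if_true, if_pos rfl]
      rw [Nat.choose_succ_self_right]
      rw [show (n+1).factorial = (n+1) * n.factorial from rfl]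
      push_cast
      ring
    · have hklen : k ≤ n := by omega
      rw [if_neg hkn, if_neg (by simp [Finset.mem_range]; omega)]
      ring

lemma limA (g : ℂ → ℂ) (hg : AnalyticAt ℂ g 0) (n : ℕ) (h : ℤ) :
    Filter.Tendsto
      (fun t : ℂ => (∑ j ∈ range (n+1), (-1:ℂ)^j * (n.choose j) * g (((h:ℂ)+j)*t)) / t^n)
      (nhdsWithin 0 {0}ᶜ) (nhds ((-1:ℂ)^n * iteratedDeriv n g 0)) := by
  obtain ⟨p, hp⟩ := hg
  have hderiv : iteratedDeriv n g 0 = (n.factorial : ℂ) * p.coeff n := by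
    obtain ⟨r, hball⟩ := hp
    have := hball.factorial_smul (1 : ℂ) n
    rw [iteratedDeriv_eq_iteratedFDeriv, ← this]
    rw [show p.coeff n = p n (fun _ => 1) from rfl, nsmul_eq_mul]
  set P : ℂ → ℂ := p.partialSum (n+1) with hP
  have hO : (fun y : ℂ => g y - P y) =O[nhds 0] fun y => ‖y‖^(n+1) := by
    simpa using hp.isBigO_sub_partialSum_pow (n+1)
  have hpoly : ∀ t : ℂ, ∑ j ∈ range (n+1), (-1:ℂ)^j * (n.choose j) * P (((h:ℂ)+j)*t)
      = (-1:ℂ)^n * (n.factorial : ℂ) * p.coeff n * t^n := by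
    intro t
    have hPval : ∀ s : ℂ, P s = ∑ k ∈ range (n+1), s^k * p.coeff k := by
      intro s
      simp [hP, FormalMultilinearSeries.partialSum,
        FormalMultilinearSeries.apply_eq_pow_smul_coeff, smul_eq_mul]
    calc ∑ j ∈ range (n+1), (-1:ℂ)^j * (n.choose j) * P (((h:ℂ)+j)*t)
        = ∑ j ∈ range (n+1), ∑ k ∈ range (n+1),
            ((-1:ℂ)^j * (n.choose j) * ((h:ℂ)+j)^k) * (t^k * p.coeff k) := by
          refine Finset.sum_congr rfl fun j _ => ?_
          rw [hPval, Finset.mul_sum]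
          refine Finset.sum_congr rfl fun k _ => ?_
          rw [mul_pow]; ring
      _ = ∑ k ∈ range (n+1), (∑ j ∈ range (n+1), (-1:ℂ)^j * (n.choose j) * ((h:ℂ)+j)^k)
            * (t^k * p.coeff k) := by
          rw [Finset.sum_comm]
          exact Finset.sum_congr rfl fun k _ => by rw [Finset.sum_mul]
      _ = (-1:ℂ)^n * (n.factorial : ℂ) * p.coeff n * t^n := by
          rw [Finset.sum_congr rfl (fun k hk =>
            by rw [sumS n k (by have := Finset.mem_range.mp hk; omega) ((h:ℂ))])]
          simp only [ite_mul, zero_mul]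
          rw [Finset.sum_ite_eq' (range (n+1)) n]
          simp only [Finset.mem_range, Nat.lt_succ_self, if_true]
          ring
  -- error part
  have hErr : (fun t : ℂ => ∑ j ∈ range (n+1),
      (-1:ℂ)^j * (n.choose j) * (g (((h:ℂ)+j)*t) - P (((h:ℂ)+j)*t)))
      =O[nhds 0] fun t => ‖t‖^(n+1) := by
    refine IsBigO.fun_sum fun j _ => ?_
    have hc : Filter.Tendsto (fun t : ℂ => ((h:ℂ)+j)*t) (nhds 0) (nhds 0) := by
      simpa using (continuous_mul_left ((h:ℂ)+j)).tendsto (0:ℂ)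
    have h1 : (fun t : ℂ => g (((h:ℂ)+j)*t) - P (((h:ℂ)+j)*t))
        =O[nhds 0] fun t => ‖((h:ℂ)+j)*t‖^(n+1) := hO.comp_tendsto hc
    have h2 : (fun t : ℂ => ‖((h:ℂ)+j)*t‖^(n+1)) =O[nhds 0] fun t => ‖t‖^(n+1) := by
      refine Asymptotics.isBigO_iff.mpr ⟨‖(h:ℂ)+j‖^(n+1), ?_⟩
      filter_upwards with t
      simp [norm_mul, mul_pow, abs_of_nonneg, norm_nonneg]
    exact (h1.trans h2).const_mul_left _
  have hlittle : (fun t : ℂ => ‖t‖^(n+1)) =o[nhds 0] fun t : ℂ => t^n := by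
    rw [Asymptotics.isLittleO_iff]
    intro ε hε
    filter_upwards [Metric.ball_mem_nhds (0:ℂ) hε] with t ht
    rw [Metric.mem_ball, dist_zero_right] at ht
    simp only [norm_pow, norm_norm]
    rw [pow_succ, mul_comm]
    exact mul_le_mul_of_nonneg_right ht.le (by positivity)
  have hdiv : Filter.Tendsto (fun t : ℂ => (∑ j ∈ range (n+1),
      (-1:ℂ)^j * (n.choose j) * (g (((h:ℂ)+j)*t) - P (((h:ℂ)+j)*t))) / t^n)
      (nhds 0) (nhds 0) := (hErr.trans_isLittleO hlittle).tendsto_div_nhds_zero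
  have heq : ∀ t : ℂ, t ≠ 0 →
      (∑ j ∈ range (n+1), (-1:ℂ)^j * (n.choose j) * g (((h:ℂ)+j)*t)) / t^n
      = (-1:ℂ)^n * (n.factorial : ℂ) * p.coeff n
        + (∑ j ∈ range (n+1), (-1:ℂ)^j * (n.choose j)
            * (g (((h:ℂ)+j)*t) - P (((h:ℂ)+j)*t))) / t^n := by
    intro t ht
    have hsplit : ∑ j ∈ range (n+1), (-1:ℂ)^j * (n.choose j) * g (((h:ℂ)+j)*t)
        = (-1:ℂ)^n * (n.factorial : ℂ) * p.coeff n * t^n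
          + ∑ j ∈ range (n+1), (-1:ℂ)^j * (n.choose j)
              * (g (((h:ℂ)+j)*t) - P (((h:ℂ)+j)*t)) := by
      rw [← hpoly t, ← Finset.sum_add_distrib]
      exact Finset.sum_congr rfl fun j _ => by ring
    rw [hsplit, add_div, mul_div_assoc, div_self (pow_ne_zero _ ht), mul_one]
  have : Filter.Tendsto (fun t : ℂ => (-1:ℂ)^n * (n.factorial : ℂ) * p.coeff n
      + (∑ j ∈ range (n+1), (-1:ℂ)^j * (n.choose j)
          * (g (((h:ℂ)+j)*t) - P (((h:ℂ)+j)*t))) / t^n)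
      (nhdsWithin 0 {0}ᶜ) (nhds ((-1:ℂ)^n * iteratedDeriv n g 0)) := by
    rw [hderiv]
    have := (tendsto_const_nhds (x := (-1:ℂ)^n * (n.factorial : ℂ) * p.coeff n)
      (f := nhdsWithin (0:ℂ) {0}ᶜ)).add (hdiv.mono_left nhdsWithin_le_nhds)
    simpa [mul_assoc] using this
  refine this.congr' ?_
  filter_upwards [self_mem_nhdsWithin] with t ht
  exact (heq t ht).symm

lemma tsum_closed (q : ℝ) (hq0 : 0 < q) (hq1 : q < 1) (w : ℂ) (hw : ‖w‖ = 1)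
    (H : ℕ) (hH : 1 ≤ H) (x : ℝ) (n : ℕ) :
    ∑' k : ℕ, (-1:ℂ)^k * w^k * (q:ℂ)^(H*k) * ((qNum q (x+k) : ℝ):ℂ)^n
    = ∑ j ∈ range (n+1), (-1:ℂ)^j * (n.choose j) * ((q^(x*j) : ℝ):ℂ)
        / (((1-q : ℝ):ℂ)^n * (1 + w * (q:ℂ)^(H+j))) := by
  have hznorm : ∀ j : ℕ, ‖-(w * (q:ℂ)^(H+j))‖ < 1 := by
    intro j
    rw [norm_neg, norm_mul, hw, one_mul, norm_pow, Complex.norm_real, Real.norm_eq_abs,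
      abs_of_pos hq0]
    exact pow_lt_one₀ hq0.le hq1 (by omega)
  have hterm : ∀ k : ℕ, (-1:ℂ)^k * w^k * (q:ℂ)^(H*k) * ((qNum q (x+k) : ℝ):ℂ)^n
      = ∑ j ∈ range (n+1), ((-1:ℂ)^j * (n.choose j) * ((q^(x*j) : ℝ):ℂ) / ((1-q:ℝ):ℂ)^n)
          * (-(w * (q:ℂ)^(H+j)))^k := by
    intro k
    have hcast : ((qNum q (x+k) : ℝ):ℂ) = (1 - ((q^(x+(k:ℝ)) : ℝ):ℂ)) / ((1-q:ℝ):ℂ) := by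
      rw [qNum]; push_cast; ring
    have hbin : (1 - ((q^(x+(k:ℝ)) : ℝ):ℂ))^n
        = ∑ j ∈ range (n+1), (-1:ℂ)^j * (n.choose j) * ((q^(x+(k:ℝ)) : ℝ):ℂ)^j := by
      rw [show (1 - ((q^(x+(k:ℝ)) : ℝ):ℂ)) = -((q^(x+(k:ℝ)) : ℝ):ℂ) + 1 from by ring,
        add_pow]
      refine Finset.sum_congr rfl fun j _ => ?_
      rw [neg_pow]; ring
    have hQ : ∀ j : ℕ, ((q^(x+(k:ℝ)) : ℝ))^j = q^(x*j) * q^(k*j) := by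
      intro j
      rw [← Real.rpow_natCast (q^(x+(k:ℝ))) j, ← Real.rpow_mul hq0.le, add_mul,
        Real.rpow_add hq0, ← Real.rpow_natCast q (k*j)]
      push_cast; ring_nf
    rw [hcast, div_pow, hbin, Finset.sum_div, Finset.mul_sum]
    refine Finset.sum_congr rfl fun j _ => ?_
    have hQC : ((q^(x+(k:ℝ)) : ℝ):ℂ)^j = ((q^(x*j) : ℝ):ℂ) * (q:ℂ)^(k*j) := by
      rw [← Complex.ofReal_pow, hQ j]; push_cast; ring
    rw [hQC, neg_pow (w * (q:ℂ)^(H+j))]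
    rw [mul_pow w ((q:ℂ)^(H+j)) k]
    ring
  rw [tsum_congr hterm, Summable.tsum_finsetSum (fun j _ =>
    (summable_geometric_of_norm_lt_one (hznorm j)).mul_left _)]
  refine Finset.sum_congr rfl fun j _ => ?_
  rw [tsum_mul_left, tsum_geometric_of_norm_lt_one (hznorm j), sub_neg_eq_add,
    ← div_eq_mul_inv, div_div]

-- base limit: z/(1-e^z) → -1
lemma hbase : Filter.Tendsto (fun z : ℂ => z/(1-Complex.exp z)) (nhdsWithin 0 {0}ᶜ)
    (nhds (-1)) := by
  have hslope : Filter.Tendsto (fun z : ℂ => (Complex.exp z - 1)/z) (nhdsWithin 0 {0}ᶜ)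
      (nhds 1) := by
    have h0 := hasDerivAt_iff_tendsto_slope.mp (Complex.hasDerivAt_exp 0)
    rw [Complex.exp_zero] at h0
    refine h0.congr fun z => ?_
    rw [slope_def_field, Complex.exp_zero, sub_zero]
  have hneg := (hslope.inv₀ one_ne_zero).neg
  norm_num at hneg
  refine hneg.neg.congr fun z => ?_
  rw [← div_neg, neg_sub]

-- log tendsto
lemma hlog : Filter.Tendsto Real.log (nhdsWithin 1 (Set.Ioo 0 1)) (nhdsWithin 0 (Set.Iio 0)) := by
  apply tendsto_nhdsWithin_of_tendsto_nhds_of_eventually_within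
  · have := (Real.continuousAt_log (by norm_num : (1:ℝ) ≠ 0)).tendsto
    rw [Real.log_one] at this
    exact this.mono_left nhdsWithin_le_nhds
  · filter_upwards [self_mem_nhdsWithin] with q hq
    exact Real.log_neg hq.1 hq.2

-- coe tendsto
lemma hcoe : Filter.Tendsto (fun t : ℝ => (t:ℂ)) (nhdsWithin 0 (Set.Iio 0))
    (nhdsWithin 0 {0}ᶜ) := by
  apply tendsto_nhdsWithin_of_tendsto_nhds_of_eventually_within
  · exact (Complex.continuous_ofReal.tendsto 0).mono_left nhdsWithin_le_nhds
  · filter_upwards [self_mem_nhdsWithin] with t ht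
    simp only [Set.mem_compl_iff, Set.mem_singleton_iff, Complex.ofReal_eq_zero]
    exact ne_of_lt ht

/-- As `q → 1⁻` within `(0,1)`, the twisted q-Euler polynomial `E^{(h,1)}_{n,w,q}(x)`
(for `w` a root of unity of odd order) converges to the classical twisted Euler
polynomial `E_{n,w}(x)`, i.e. to the `n`-th derivative at `t = 0` of
`t ↦ 2 e^{xt}/(w e^t + 1)`. -/
theorem stmt15 (w : ℂ) (m : ℕ) (hm : Odd m) (hm0 : 0 < m) (hw : w ^ m = 1)
    (h : ℤ) (hh : 1 ≤ h) (x : ℝ) (hx : 0 ≤ x) (n : ℕ) :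
    Filter.Tendsto (fun q : ℝ => twE q h w n x) (nhdsWithin 1 (Set.Ioo 0 1))
      (nhds (iteratedDeriv n
        (fun t : ℂ => 2 * Complex.exp ((x : ℂ) * t) / (w * Complex.exp t + 1)) 0)) := by
  set g : ℂ → ℂ := fun t : ℂ => 2 * Complex.exp ((x : ℂ) * t) / (w * Complex.exp t + 1)
    with hgdef
  have hwne : w + 1 ≠ 0 := by
    intro hcon
    have hwm : w = -1 := by linear_combination hcon
    rw [hwm, hm.neg_one_pow] at hw
    exact (by norm_num : ((-1:ℂ)) ≠ 1) hw
  have hwnorm : ‖w‖ = 1 := by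
    have h1 : ‖w‖^m = 1 := by rw [← norm_pow, hw, norm_one]
    rcases lt_trichotomy ‖w‖ 1 with hlt | heq | hgt
    · exact absurd h1 (by have := pow_lt_one₀ (norm_nonneg w) hlt hm0.ne'; linarith)
    · exact heq
    · exact absurd h1 (by have := one_lt_pow₀ hgt hm0.ne'; linarith)
  have hganal : AnalyticAt ℂ g 0 := by
    apply AnalyticAt.div
    · exact analyticAt_const.mul (analyticAt_cexp.comp (analyticAt_const.mul analyticAt_id))
    · exact (analyticAt_const.mul analyticAt_cexp).add analyticAt_const
    · simpa [Complex.exp_zero] using hwne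
  set H := h.toNat with hHdef
  have hHh : (H:ℤ) = h := Int.toNat_of_nonneg (by omega)
  have hH1 : 1 ≤ H := by omega
  set D := iteratedDeriv n g 0 with hD
  set F : ℂ → ℂ := fun z => ∑ j ∈ range (n+1), (-1:ℂ)^j * (n.choose j) * g (((h:ℂ)+j)*z)
    with hF
  set Φ : ℝ → ℂ := fun t => (((1+Real.exp t)/2 : ℝ):ℂ)
      * Complex.exp (-((x:ℂ)*(h:ℂ))*(t:ℂ)) * (F (t:ℂ) / (t:ℂ)^n)
      * ((t:ℂ)/(1-Complex.exp (t:ℂ)))^n with hΦ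
  -- the limit of Φ
  have hΦlim : Filter.Tendsto Φ (nhdsWithin 0 (Set.Iio 0)) (nhds D) := by
    have l3 : Filter.Tendsto (fun t : ℝ => F (t:ℂ)/(t:ℂ)^n) (nhdsWithin 0 (Set.Iio 0))
        (nhds ((-1:ℂ)^n * D)) := (limA g hganal n h).comp hcoe
    have l4 : Filter.Tendsto (fun t : ℝ => ((t:ℂ)/(1-Complex.exp (t:ℂ)))^n)
        (nhdsWithin 0 (Set.Iio 0)) (nhds ((-1:ℂ)^n)) := (hbase.comp hcoe).pow n
    have l1 : Filter.Tendsto (fun t : ℝ => (((1+Real.exp t)/2 : ℝ):ℂ))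
        (nhdsWithin 0 (Set.Iio 0)) (nhds 1) := by
      have hc : Continuous fun t : ℝ => (((1+Real.exp t)/2 : ℝ):ℂ) :=
        Complex.continuous_ofReal.comp ((continuous_const.add Real.continuous_exp).div_const 2)
      have h2 := hc.tendsto 0
      have hv : (((1+Real.exp 0)/2 : ℝ):ℂ) = 1 := by norm_num
      rw [hv] at h2
      exact h2.mono_left nhdsWithin_le_nhds
    have l2 : Filter.Tendsto (fun t : ℝ => Complex.exp (-((x:ℂ)*(h:ℂ))*(t:ℂ)))
        (nhdsWithin 0 (Set.Iio 0)) (nhds 1) := by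
      have hc : Continuous fun t : ℝ => Complex.exp (-((x:ℂ)*(h:ℂ))*(t:ℂ)) :=
        Complex.continuous_exp.comp (continuous_const.mul Complex.continuous_ofReal)
      have h2 := hc.tendsto 0
      have hv : Complex.exp (-((x:ℂ)*(h:ℂ))*((0:ℝ):ℂ)) = 1 := by
        simp [Complex.exp_zero]
      rw [hv] at h2
      exact h2.mono_left nhdsWithin_le_nhds
    have combined := ((l1.mul l2).mul l3).mul l4
    have hone : (-1:ℂ)^n * (-1:ℂ)^n = 1 := by rw [← mul_pow]; norm_num
    have hval : (1:ℂ)*1*((-1:ℂ)^n*D)*(-1:ℂ)^n = D := by linear_combination D * hone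
    rw [hval] at combined
    exact combined
  have hcomp : Filter.Tendsto (fun q : ℝ => Φ (Real.log q)) (nhdsWithin 1 (Set.Ioo 0 1))
      (nhds D) := hΦlim.comp hlog
  refine hcomp.congr' ?_
  filter_upwards [self_mem_nhdsWithin] with q hq
  obtain ⟨hq0, hq1⟩ := hq
  set t := Real.log q with htdef
  have hqt : Real.exp t = q := Real.exp_log hq0
  have ht0 : t < 0 := Real.log_neg hq0 hq1
  have htC : (t:ℂ) ≠ 0 := by exact_mod_cast ht0.ne
  have hexpC : Complex.exp (t:ℂ) = (q:ℂ) := by rw [← Complex.ofReal_exp, hqt]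
  have h1q : (1:ℝ) - q ≠ 0 := by linarith
  have h1qC : (1:ℂ) - (q:ℂ) ≠ 0 := by exact_mod_cast h1q
  have hwq : ∀ j : ℕ, 1 + w * (q:ℂ)^(H+j) ≠ 0 := by
    intro j hcon
    have h2 : w * (q:ℂ)^(H+j) = -1 := by linear_combination hcon
    have h3 : ‖w * (q:ℂ)^(H+j)‖ < 1 := by
      rw [norm_mul, hwnorm, one_mul, norm_pow, Complex.norm_real, Real.norm_eq_abs,
        abs_of_pos hq0]
      exact pow_lt_one₀ hq0.le hq1 (by omega)
    rw [h2] at h3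
    norm_num at h3
  -- q-power identities
  have hqpow : ∀ N : ℕ, Complex.exp ((N:ℂ)*(t:ℂ)) = (q:ℂ)^N := by
    intro N
    rw [Complex.exp_nat_mul, hexpC]
  have hxj : ∀ j : ℕ, ((q^(x*(j:ℝ)) : ℝ):ℂ) = Complex.exp ((x:ℂ)*(j:ℂ)*(t:ℂ)) := by
    intro j
    rw [Real.rpow_def_of_pos hq0, Complex.ofReal_exp]
    congr 1
    push_cast
    ring
  have hgj : ∀ j : ℕ, g (((h:ℂ)+j)*(t:ℂ))
      = 2 * ((q^(x*(j:ℝ)) : ℝ):ℂ) * Complex.exp (((x:ℂ)*(h:ℂ))*(t:ℂ))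
        / (1 + w*(q:ℂ)^(H+j)) := by
    intro j
    have e1 : ((h:ℂ)+j)*(t:ℂ) = (((H+j : ℕ):ℂ))*(t:ℂ) := by rw [← hHh]; push_cast; ring
    have e2 : (x:ℂ)*((((H+j : ℕ):ℂ))*(t:ℂ))
        = (x:ℂ)*(j:ℂ)*(t:ℂ) + ((x:ℂ)*(h:ℂ))*(t:ℂ) := by rw [← hHh]; push_cast; ring
    rw [hgdef]
    simp only
    rw [e1, hqpow (H+j), e2, Complex.exp_add, ← hxj j, add_comm (w * (q:ℂ)^(H+j)) 1]
    ring
  -- now the main computation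
  show Φ t = twE q h w n x
  rw [twE]
  have hzp : ∀ k : ℕ, (q:ℂ)^(h*(k:ℕ) : ℤ) = (q:ℂ)^(H*k : ℕ) := by
    intro k
    rw [← hHh, show (H:ℤ)*(k:ℕ) = ((H*k : ℕ):ℤ) from by push_cast; ring, zpow_natCast]
  rw [tsum_congr (fun k => by rw [hzp k]),
    tsum_closed q hq0 hq1 w hwnorm H hH1 x n]
  rw [hΦ]
  simp only
  rw [hexpC, hqt]
  have hred : (F (t:ℂ)/(t:ℂ)^n) * ((t:ℂ)/(1-(q:ℂ)))^n = F (t:ℂ)/(1-(q:ℂ))^n := by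
    rw [div_pow, div_mul_div_comm, mul_comm (F (t:ℂ)) ((t:ℂ)^n),
      mul_div_mul_left _ _ (pow_ne_zero n htC)]
  rw [mul_assoc ((((1 + q) / 2 : ℝ):ℂ) * Complex.exp (-((x:ℂ) * (h:ℂ)) * (t:ℂ)))
    (F (t:ℂ) / (t:ℂ)^n) (((t:ℂ)/(1-(q:ℂ)))^n), hred, hF]
  simp only
  rw [Finset.sum_congr rfl (fun j _ => by rw [hgj j]), Finset.sum_div, Finset.mul_sum,
    Finset.mul_sum]
  refine Finset.sum_congr rfl fun j _ => ?_
  rw [neg_mul, Complex.exp_neg]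
  have hE := Complex.exp_ne_zero ((x:ℂ)*(h:ℂ)*(t:ℂ))
  push_cast
  field_simp [hwq j]
end
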